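/- arXiv:1507.02883 — 5 statements merged into one kernel-verified Lean document; each statement's English description precedes it below -/
import Mathlib

section
/- Lagrange–Jacobi identity: if y is an isolated collision solution at the origin, then there exist continuous functions B₁, B₂ : [−δ, δ] → ℝ such that for all t ∈ [−δ, δ] \ {0}: Ï(t) = (4 − 2α)·½|ẏ(t)|² + B₁(t) = (4 − 2α)·(h + V(y(t))) + B₁(t) = (4 − 2α)·m₁/(α|y(t)|^α) + B₂(t), where I(t) = |y(t)|². -/
/-!
Differentiating `I = ‖y‖²` twice gives `Ï = 2‖ẏ‖² + 2⟪ÿ, y⟫`. Along a solution, `⟪ÿ, y⟫` is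
minus the sum of the virial terms `m_j ⟪y - c_j, y⟫ / ‖y - c_j‖^(α+2)`; for the centre at the
origin this term is `m₁ / ‖y‖^α = α U₁(y)`, by homogeneity of degree `-α`. The other centres
lie away from `y(0) = 0`, so their potential and virial terms are continuous on all of
`[-δ, δ]`. Eliminating `‖ẏ‖²` or `α U₁` with the energy relation produces the three identities,
with continuous remainders built from `h` and these terms. At `t = ±δ` the second derivative
is computed from one-sided information, which suffices by uniqueness of one-sided derivatives.
-/

open Filter Topology Set
open scoped RealInnerProductSpace

variable {E : Type*} [NormedAddCommGroup E] [InnerProductSpace ℝ E]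

theorem eventually_differentiableAt_of_deriv_or_deriv_deriv_ne_zero {f : ℝ → E} {t : ℝ}
    (hf : DifferentiableAt ℝ f t) (hf' : DifferentiableAt ℝ (deriv f) t)
    (h : deriv f t ≠ 0 ∨ deriv (deriv f) t ≠ 0) :
    ∀ᶠ s in 𝓝 t, DifferentiableAt ℝ f s := by
  have hne : ∀ᶠ s in 𝓝[≠] t, deriv f s ≠ 0 := by
    rcases h with h | h
    · exact nhdsWithin_le_nhds (hf'.continuousAt.eventually_ne h)
    · exact hf'.hasDerivAt.eventually_ne h
  rw [← nhdsNE_sup_pure t]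
  exact eventually_sup.2 ⟨hne.mono fun s => differentiableAt_of_deriv_ne_zero, hf⟩

theorem deriv_deriv_norm_sq {f : ℝ → E} {S : Set ℝ} {t : ℝ}
    (hS : UniqueDiffWithinAt ℝ S t) (hfS : ∀ᶠ s in 𝓝[S] t, DifferentiableAt ℝ f s)
    (hf : DifferentiableAt ℝ f t) (hf' : DifferentiableAt ℝ (deriv f) t) :
    deriv (deriv fun s => ‖f s‖ ^ 2) t
      = 2 * ‖deriv f t‖ ^ 2 + 2 * ⟪deriv (deriv f) t, f t⟫ := by
  set D := 2 * ‖deriv f t‖ ^ 2 + 2 * ⟪deriv (deriv f) t, f t⟫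
  have hderiv : ∀ s, DifferentiableAt ℝ f s →
      deriv (fun s => ‖f s‖ ^ 2) s = 2 * ⟪f s, deriv f s⟫ :=
    fun s hs => hs.hasDerivAt.norm_sq.deriv
  have hD : HasDerivAt (fun s => 2 * ⟪f s, deriv f s⟫) D t := by
    refine ((hf.hasDerivAt.inner ℝ hf'.hasDerivAt).const_mul 2).congr_deriv ?_
    rw [real_inner_self_eq_norm_sq, real_inner_comm]
    ring
  by_cases hd : DifferentiableAt ℝ (deriv fun s => ‖f s‖ ^ 2) t
  · have hDS := hD.hasDerivWithinAt.congr_of_eventuallyEq (hfS.mono hderiv) (hderiv t hf)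
    rw [← hd.derivWithin hS, hDS.derivWithin hS]
  · -- The junk value of the left side is `0`; and `D = 0`, since otherwise `f` would be
    -- differentiable near `t`, and then so would `‖f‖²'`.
    rw [deriv_zero_of_not_differentiableAt hd, eq_comm]
    by_contra hD0
    have h : deriv f t ≠ 0 ∨ deriv (deriv f) t ≠ 0 := by
      by_contra! h
      simp [D, h] at hD0
    have heq : deriv (fun s => ‖f s‖ ^ 2) =ᶠ[𝓝 t] fun s => 2 * ⟪f s, deriv f s⟫ :=
      (eventually_differentiableAt_of_deriv_or_deriv_deriv_ne_zero hf hf' h).mono hderiv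
    exact hd (heq.differentiableAt_iff.2 hD.differentiableAt)

theorem inner_self_div_norm_rpow_add_two {x : E} (hx : x ≠ 0) (α : ℝ) :
    ⟪x, x⟫ / ‖x‖ ^ (α + 2) = (‖x‖ ^ α)⁻¹ := by
  have hx' : 0 < ‖x‖ := norm_pos_iff.2 hx
  rw [real_inner_self_eq_norm_sq, Real.rpow_add hx', Real.rpow_two]
  field_simp

namespace NCenter

variable {N : ℕ} (c : Fin N → ℂ) (m : Fin N → ℝ) (α : ℝ)

noncomputable def partialPotential (s : Finset (Fin N)) (x : ℂ) : ℝ :=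
  ∑ j ∈ s, m j / (α * ‖x - c j‖ ^ α)

noncomputable def partialVirial (s : Finset (Fin N)) (x : ℂ) : ℝ :=
  ∑ j ∈ s, m j * ⟪x - c j, x⟫ / ‖x - c j‖ ^ (α + 2)

variable {α}

theorem continuousOn_partialPotential (hα : α ≠ 0) (s : Finset (Fin N)) :
    ContinuousOn (partialPotential c m α s) {x | ∀ j ∈ s, x ≠ c j} := by
  refine continuousOn_finsetSum s fun j hj => continuousOn_const.div ?_ fun x hx => ?_
  · exact continuousOn_const.mul <| (continuousOn_id.sub continuousOn_const).norm.rpow_const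
      fun x hx => Or.inl (norm_ne_zero_iff.2 (sub_ne_zero.2 (hx j hj)))
  · exact mul_ne_zero hα (Real.rpow_pos_of_pos (norm_pos_iff.2 (sub_ne_zero.2 (hx j hj))) α).ne'

theorem continuousOn_partialVirial (s : Finset (Fin N)) :
    ContinuousOn (partialVirial c m α s) {x | ∀ j ∈ s, x ≠ c j} := by
  refine continuousOn_finsetSum s fun j hj => ContinuousOn.div (by fun_prop) ?_ fun x hx => ?_
  · exact (continuousOn_id.sub continuousOn_const).norm.rpow_const
      fun x hx => Or.inl (norm_ne_zero_iff.2 (sub_ne_zero.2 (hx j hj)))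
  · exact (Real.rpow_pos_of_pos (norm_pos_iff.2 (sub_ne_zero.2 (hx j hj))) _).ne'

theorem inner_force_self (x : ℂ) :
    ⟪-∑ j, (m j : ℂ) * (x - c j) / ((‖x - c j‖ ^ (α + 2) : ℝ) : ℂ), x⟫
      = -partialVirial c m α Finset.univ x := by
  simp only [inner_neg_left, sum_inner, partialVirial]
  congr 1
  refine Finset.sum_congr rfl fun j _ => ?_
  rw [mul_div_right_comm, ← Complex.ofReal_div, ← Complex.real_smul, real_inner_smul_left]
  ring

end NCenter

open NCenter in
theorem stmt_2_general
    (N : ℕ) (hN : 0 < N) (c : Fin N → ℂ) (m : Fin N → ℝ)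
    (hc_inj : Function.Injective c)
    (α : ℝ) (hα1 : 1 ≤ α)
    (hc1 : c ⟨0, hN⟩ = 0)
    (δ : ℝ) (hδ : 0 < δ) (y : ℝ → ℂ)
    (hy_cont : ContinuousOn y (Set.Icc (-δ) δ))
    (hy0 : y 0 = 0)
    (hy_ne : ∀ t ∈ Set.Icc (-δ) δ, t ≠ 0 → ∀ j, y t ≠ c j)
    (hy_d1 : ∀ t ∈ Set.Icc (-δ) δ, t ≠ 0 → DifferentiableAt ℝ y t)
    (hy_d2 : ∀ t ∈ Set.Icc (-δ) δ, t ≠ 0 → DifferentiableAt ℝ (deriv y) t)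
    (hy_eq : ∀ t ∈ Set.Icc (-δ) δ, t ≠ 0 →
      deriv (deriv y) t = -∑ j, (m j : ℂ) * (y t - c j) / ((‖y t - c j‖ ^ (α + 2) : ℝ) : ℂ))
    (h : ℝ)
    (hy_energy : ∀ t ∈ Set.Icc (-δ) δ, t ≠ 0 →
      (1 / 2) * ‖deriv y t‖ ^ 2 - ∑ j, m j / (α * ‖y t - c j‖ ^ α) = h) :
    ∃ B₁ B₂ : ℝ → ℝ,
      ContinuousOn B₁ (Set.Icc (-δ) δ) ∧ ContinuousOn B₂ (Set.Icc (-δ) δ) ∧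
      ∀ t ∈ Set.Icc (-δ) δ, t ≠ 0 →
        deriv (deriv (fun s => ‖y s‖ ^ 2)) t
            = (4 - 2 * α) * ((1 / 2) * ‖deriv y t‖ ^ 2) + B₁ t ∧
        deriv (deriv (fun s => ‖y s‖ ^ 2)) t
            = (4 - 2 * α) * (h + ∑ j, m j / (α * ‖y t - c j‖ ^ α)) + B₁ t ∧
        deriv (deriv (fun s => ‖y s‖ ^ 2)) t
            = (4 - 2 * α) * (m ⟨0, hN⟩ / (α * ‖y t‖ ^ α)) + B₂ t := by
  set j₀ : Fin N := ⟨0, hN⟩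
  set S := Finset.univ.erase j₀
  have hα : α ≠ 0 := by linarith
  have hyS : MapsTo y (Icc (-δ) δ) {x | ∀ j ∈ S, x ≠ c j} := by
    intro t ht j hj
    rcases eq_or_ne t 0 with rfl | ht0
    · rw [hy0, ← hc1]
      exact hc_inj.ne (Finset.ne_of_mem_erase hj).symm
    · exact hy_ne t ht ht0 j
  set W := fun t => partialPotential c m α S (y t)
  set G := fun t => partialVirial c m α S (y t)
  have hW : ContinuousOn W (Icc (-δ) δ) :=
    (continuousOn_partialPotential c m hα S).comp hy_cont hyS
  have hG : ContinuousOn G (Icc (-δ) δ) := (continuousOn_partialVirial c m S).comp hy_cont hyS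
  refine ⟨fun t => 2 * α * h + 2 * α * W t - 2 * G t, fun t => 4 * h + 4 * W t - 2 * G t,
    by fun_prop, by fun_prop, fun t ht ht0 => ?_⟩
  have hyt : y t ≠ 0 := hc1 ▸ hy_ne t ht ht0 j₀
  have hV : ∑ j, m j / (α * ‖y t - c j‖ ^ α) = m j₀ / (α * ‖y t‖ ^ α) + W t := by
    rw [← Finset.add_sum_erase _ _ (Finset.mem_univ j₀), hc1, sub_zero]
    rfl
  have hI : deriv (deriv (fun s => ‖y s‖ ^ 2)) t
      = 2 * ‖deriv y t‖ ^ 2 + 2 * ⟪deriv (deriv y) t, y t⟫ := by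
    refine deriv_deriv_norm_sq (uniqueDiffOn_Icc (by linarith) t ht) ?_ (hy_d1 t ht ht0)
      (hy_d2 t ht ht0)
    filter_upwards [self_mem_nhdsWithin, nhdsWithin_le_nhds (isOpen_ne.mem_nhds ht0)]
      with s hs hs0 using hy_d1 s hs hs0
  have hF : ⟪deriv (deriv y) t, y t⟫ = -(m j₀ * (‖y t‖ ^ α)⁻¹) - G t := by
    rw [hy_eq t ht ht0, inner_force_self, partialVirial,
      ← Finset.add_sum_erase _ _ (Finset.mem_univ j₀), hc1, sub_zero, mul_div_assoc,
      inner_self_div_norm_rpow_add_two hyt, neg_add']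
    rfl
  have hE : ‖deriv y t‖ ^ 2 = 2 * (h + (m j₀ / (α * ‖y t‖ ^ α) + W t)) := by
    linarith [hV ▸ hy_energy t ht ht0]
  have hyα : ‖y t‖ ^ α ≠ 0 := (Real.rpow_pos_of_pos (norm_pos_iff.2 hyt) α).ne'
  refine ⟨?_, ?_, ?_⟩
  · rw [hI, hF, hE]; field_simp; ring
  · rw [hI, hF, hE, hV]; field_simp; ring
  · rw [hI, hF, hE]; field_simp; ring

/-- Lagrange–Jacobi identity at an isolated collision. -/
theorem stmt_2
    (N : ℕ) (hN : 0 < N) (c : Fin N → ℂ) (m : Fin N → ℝ)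
    (hc_inj : Function.Injective c) (hm : ∀ j, 0 < m j)
    (α : ℝ) (hα1 : 1 ≤ α) (hα2 : α < 2)
    (hc1 : c ⟨0, hN⟩ = 0)
    (δ : ℝ) (hδ : 0 < δ) (y : ℝ → ℂ)
    (hy_cont : ContinuousOn y (Set.Icc (-δ) δ))
    (hy0 : y 0 = 0)
    (hy_ne : ∀ t ∈ Set.Icc (-δ) δ, t ≠ 0 → ∀ j, y t ≠ c j)
    (hy_d1 : ∀ t ∈ Set.Icc (-δ) δ, t ≠ 0 → DifferentiableAt ℝ y t)
    (hy_d2 : ∀ t ∈ Set.Icc (-δ) δ, t ≠ 0 → DifferentiableAt ℝ (deriv y) t)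
    (hy_eq : ∀ t ∈ Set.Icc (-δ) δ, t ≠ 0 →
      deriv (deriv y) t = -∑ j, (m j : ℂ) * (y t - c j) / ((‖y t - c j‖ ^ (α + 2) : ℝ) : ℂ))
    (h : ℝ)
    (hy_energy : ∀ t ∈ Set.Icc (-δ) δ, t ≠ 0 →
      (1 / 2) * ‖deriv y t‖ ^ 2 - ∑ j, m j / (α * ‖y t - c j‖ ^ α) = h) :
    ∃ B₁ B₂ : ℝ → ℝ,
      ContinuousOn B₁ (Set.Icc (-δ) δ) ∧ ContinuousOn B₂ (Set.Icc (-δ) δ) ∧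
      ∀ t ∈ Set.Icc (-δ) δ, t ≠ 0 →
        deriv (deriv (fun s => ‖y s‖ ^ 2)) t
            = (4 - 2 * α) * ((1 / 2) * ‖deriv y t‖ ^ 2) + B₁ t ∧
        deriv (deriv (fun s => ‖y s‖ ^ 2)) t
            = (4 - 2 * α) * (h + ∑ j, m j / (α * ‖y t - c j‖ ^ α)) + B₁ t ∧
        deriv (deriv (fun s => ‖y s‖ ^ 2)) t
            = (4 - 2 * α) * (m ⟨0, hN⟩ / (α * ‖y t‖ ^ α)) + B₂ t :=
  stmt_2_general N hN c m hc_inj α hα1 hc1 δ hδ y hy_cont hy0 hy_ne hy_d1 hy_d2 hy_eq h hy_energy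
end

section
/- Vanishing of the angular momentum at a collision: if y is an isolated collision solution at the origin and J(t) = Im(conj(y(t))·ẏ(t)), then lim_{t → 0} J(t) = 0. -/
/-!
The angular momentum is bounded by `‖y‖ ‖ẏ‖`, and energy conservation gives
`‖y‖² ‖ẏ‖² = 2h ‖y‖² + 2 ‖y‖² V(y)`. As `y → 0`, a center at the origin contributes
`(m/α) ‖y‖^(2-α) → 0` to `‖y‖² V(y)` because `α < 2`, and every other center a bounded
multiple of `‖y‖²`.
-/

open Filter Topology

section
variable {E : Type*} [NormedAddCommGroup E] {α : ℝ}

theorem tendsto_norm_sq_mul_div_rpow_norm_sub (hα : 0 < α) (hα2 : α < 2) (μ : ℝ) (c : E) :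
    Tendsto (fun z : E => ‖z‖ ^ 2 * (μ / (α * ‖z - c‖ ^ α))) (𝓝 0) (𝓝 0) := by
  rcases eq_or_ne c 0 with rfl | hc
  · have h2α : 0 < 2 - α := by linarith
    have hcont : Tendsto (fun z : E => μ / α * ‖z‖ ^ (2 - α)) (𝓝 0) (𝓝 0) := by
      simpa [Real.zero_rpow h2α.ne'] using
        ((continuous_norm.rpow_const fun _ => Or.inr h2α.le).tendsto (0 : E)).const_mul (μ / α)
    refine hcont.congr fun z => ?_
    rcases eq_or_ne z 0 with rfl | hz
    · simp [Real.zero_rpow h2α.ne']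
    · rw [sub_zero, Real.rpow_sub (norm_pos_iff.mpr hz), Real.rpow_two]
      field_simp
  · have hcont : ContinuousAt (fun z : E => ‖z‖ ^ 2 * (μ / (α * ‖z - c‖ ^ α))) 0 := by
      refine continuousAt_id.norm.pow 2 |>.mul (continuousAt_const.div
        (continuousAt_const.mul ((continuousAt_id.sub continuousAt_const).norm.rpow_const ?_)) ?_)
      · simp [hc]
      · simpa using mul_ne_zero hα.ne' (Real.rpow_pos_of_pos (norm_pos_iff.mpr hc) α).ne'
    simpa using hcont.tendsto

theorem tendsto_norm_sq_mul_sum_div_rpow_norm_sub {ι : Type*} [Fintype ι] (hα : 0 < α)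
    (hα2 : α < 2) (μ : ι → ℝ) (c : ι → E) :
    Tendsto (fun z : E => ‖z‖ ^ 2 * ∑ j, μ j / (α * ‖z - c j‖ ^ α)) (𝓝 0) (𝓝 0) := by
  simp_rw [Finset.mul_sum]
  simpa using tendsto_finsetSum Finset.univ
    fun j _ => tendsto_norm_sq_mul_div_rpow_norm_sub hα hα2 (μ j) (c j)
end

theorem abs_im_conj_mul_le (z w : ℂ) : |((starRingEnd ℂ) z * w).im| ≤ ‖z‖ * ‖w‖ := by
  simpa using Complex.abs_im_le_norm ((starRingEnd ℂ) z * w)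

theorem stmt_3_general
    (N : ℕ) (c : Fin N → ℂ) (m : Fin N → ℝ)
    (α : ℝ) (hα1 : 1 ≤ α) (hα2 : α < 2)
    (δ : ℝ) (hδ : 0 < δ) (y : ℝ → ℂ)
    (hy_cont : ContinuousOn y (Set.Icc (-δ) δ))
    (hy0 : y 0 = 0)
    (h : ℝ)
    (hy_energy : ∀ t ∈ Set.Icc (-δ) δ, t ≠ 0 →
      (1 / 2) * ‖deriv y t‖ ^ 2 - ∑ j, m j / (α * ‖y t - c j‖ ^ α) = h) :
    Filter.Tendsto (fun t : ℝ => ((starRingEnd ℂ) (y t) * deriv y t).im)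
      (𝓝[≠] (0 : ℝ)) (𝓝 0) := by
  have hIcc : Set.Icc (-δ) δ ∈ 𝓝 (0 : ℝ) := Icc_mem_nhds (by linarith) hδ
  have hy : Tendsto y (𝓝[≠] 0) (𝓝 0) :=
    hy0 ▸ ((hy_cont 0 (mem_of_mem_nhds hIcc)).continuousAt hIcc).tendsto.mono_left
      nhdsWithin_le_nhds
  have hV := (tendsto_norm_sq_mul_sum_div_rpow_norm_sub (by linarith) hα2 m c).comp hy
  have hsq : Tendsto (fun t => (‖y t‖ * ‖deriv y t‖) ^ 2) (𝓝[≠] 0) (𝓝 0) := by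
    have hlim := ((hy.norm.pow 2).const_mul (2 * h)).add (hV.const_mul 2)
    norm_num at hlim
    refine hlim.congr' ?_
    filter_upwards [nhdsWithin_le_nhds hIcc, self_mem_nhdsWithin] with t ht ht0
    have henergy := hy_energy t ht ht0
    linear_combination (-2 * ‖y t‖ ^ 2) * henergy
  have hprod : Tendsto (fun t => ‖y t‖ * ‖deriv y t‖) (𝓝[≠] 0) (𝓝 0) := by
    simpa [Real.sqrt_sq, mul_nonneg] using hsq.sqrt
  exact squeeze_zero_norm (fun t => abs_im_conj_mul_le _ _) hprod

/-- the angular momentum J(t) = Im(conj(y t) * y'(t)) tends to 0 at the collision. -/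
theorem stmt_3
    (N : ℕ) (hN : 0 < N) (c : Fin N → ℂ) (m : Fin N → ℝ)
    (hc_inj : Function.Injective c) (hm : ∀ j, 0 < m j)
    (α : ℝ) (hα1 : 1 ≤ α) (hα2 : α < 2)
    (hc1 : c ⟨0, hN⟩ = 0)
    (δ : ℝ) (hδ : 0 < δ) (y : ℝ → ℂ)
    (hy_cont : ContinuousOn y (Set.Icc (-δ) δ))
    (hy0 : y 0 = 0)
    (hy_ne : ∀ t ∈ Set.Icc (-δ) δ, t ≠ 0 → ∀ j, y t ≠ c j)
    (hy_d1 : ∀ t ∈ Set.Icc (-δ) δ, t ≠ 0 → DifferentiableAt ℝ y t)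
    (hy_d2 : ∀ t ∈ Set.Icc (-δ) δ, t ≠ 0 → DifferentiableAt ℝ (deriv y) t)
    (hy_eq : ∀ t ∈ Set.Icc (-δ) δ, t ≠ 0 →
      deriv (deriv y) t = -∑ j, (m j : ℂ) * (y t - c j) / ((‖y t - c j‖ ^ (α + 2) : ℝ) : ℂ))
    (h : ℝ)
    (hy_energy : ∀ t ∈ Set.Icc (-δ) δ, t ≠ 0 →
      (1 / 2) * ‖deriv y t‖ ^ 2 - ∑ j, m j / (α * ‖y t - c j‖ ^ α) = h) :
    Filter.Tendsto (fun t : ℝ => ((starRingEnd ℂ) (y t) * deriv y t).im)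
      (𝓝[≠] (0 : ℝ)) (𝓝 0) :=
  stmt_3_general N c m α hα1 hα2 δ hδ y hy_cont hy0 h hy_energy
end

section
/- Differential inequalities for the moment of inertia: let y be an isolated collision solution at the origin and I(t) = |y(t)|². Then there exist δ₀ ∈ (0, δ] and constants c ≥ 0, d > 0, e > 0 such that for all t ∈ (0, δ₀]: (i) İ(t) ≥ 0; (ii) İ(t)² ≤ (4/(2−α))·I(t)·Ï(t) + c·I(t); (iii) Ï(t)·I(t)^{α/2} ≥ d; (iv) the third derivative of I exists at t and |I'''(t)| ≤ e·Ï(t)^{3/2 + 1/α}. -/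
open Filter Topology Set
open scoped RealInnerProductSpace

/-!
Write `x = y t`, `v = ẏ t` and `I = ‖y‖ ^ 2`, so that `Ï = 2 (⟪x, ÿ⟫ + ‖v‖ ^ 2)`. Near the
collision the centre at the origin dominates, `⟪x, ÿ⟫ = -m₁ ‖x‖ ^ (-α) + o(1)`, while the energy
gives `‖v‖ ^ 2 = 2 (V x + h)` with `m₁ ‖x‖ ^ (-α) ≤ α V x ≤ (∑ m) ‖x‖ ^ (-α)`. As `α < 2`, this
yields `Ï ≥ 2 (2 - α) V x - O(1) ≥ d ‖x‖ ^ (-α)`, which is (iii), and with Cauchy–Schwarz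
`İ ^ 2 ≤ 4 I ‖v‖ ^ 2` also (ii). So `I` is convex on `[0, t]` with `I 0 = 0`, whence (i). One more
derivative along the flow gives `|I⃛| = O(‖x‖ ^ (-(α + 1)) ‖v‖) = O(‖x‖ ^ (-(3 α / 2 + 1)))`, and
this is `O(Ï ^ (3 / 2 + 1 / α))` by the lower bound on `Ï`.
-/

noncomputable section

section Centers

variable {ι E : Type*} [Fintype ι] [NormedAddCommGroup E]

def centerPotential (m : ι → ℝ) (c : ι → E) (α : ℝ) (x : E) : ℝ :=
  ∑ j, m j / (α * ‖x - c j‖ ^ α)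

variable {m : ι → ℝ} {c : ι → E} {α h : ℝ} {x v : E} {j₀ : ι}

lemma mul_rpow_neg_le_mul_centerPotential (hm : ∀ j, 0 ≤ m j) (hα : 0 < α) (hj₀ : c j₀ = 0) :
    m j₀ * ‖x‖ ^ (-α) ≤ α * centerPotential m c α x := by
  have hterm : m j₀ / (α * ‖x‖ ^ α) ≤ centerPotential m c α x := by
    simpa [centerPotential, hj₀] using
      Finset.single_le_sum (f := fun j => m j / (α * ‖x - c j‖ ^ α))
        (fun j _ => by have := hm j; positivity) (Finset.mem_univ j₀)
  calc m j₀ * ‖x‖ ^ (-α) = α * (m j₀ / (α * ‖x‖ ^ α)) := by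
        rw [Real.rpow_neg (norm_nonneg x)]; field_simp
    _ ≤ α * centerPotential m c α x := by gcongr

lemma mul_centerPotential_le (hm : ∀ j, 0 ≤ m j) (hα : 0 < α) (hx : x ≠ 0)
    (hnear : ∀ j, ‖x‖ ≤ ‖x - c j‖) :
    α * centerPotential m c α x ≤ (∑ j, m j) * ‖x‖ ^ (-α) := by
  have hx : 0 < ‖x‖ := norm_pos_iff.2 hx
  rw [centerPotential, Finset.mul_sum, Finset.sum_mul]
  refine Finset.sum_le_sum fun j _ => ?_
  have hj : 0 < ‖x - c j‖ := hx.trans_le (hnear j)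
  calc α * (m j / (α * ‖x - c j‖ ^ α)) = m j * ‖x - c j‖ ^ (-α) := by
        rw [Real.rpow_neg hj.le]; field_simp
    _ ≤ m j * ‖x‖ ^ (-α) :=
        mul_le_mul_of_nonneg_left (Real.rpow_le_rpow_of_nonpos hx (hnear j) (by linarith))
          (hm j)

lemma norm_le_sqrt_mul_rpow_neg (hm : ∀ j, 0 ≤ m j) (hα : 0 < α) (hx : x ≠ 0)
    (hnear : ∀ j, ‖x‖ ≤ ‖x - c j‖) (hx1 : 1 ≤ ‖x‖ ^ (-α))
    (hv : ‖v‖ ^ 2 = 2 * (centerPotential m c α x + h)) :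
    ‖v‖ ≤ √(2 * ((∑ j, m j) / α + |h|)) * ‖x‖ ^ (-(α / 2)) := by
  have hV := mul_centerPotential_le hm hα hx hnear
  have hsq : ‖v‖ ^ 2 ≤ 2 * ((∑ j, m j) / α + |h|) * ‖x‖ ^ (-α) := by
    have : centerPotential m c α x ≤ (∑ j, m j) / α * ‖x‖ ^ (-α) := by
      rw [div_mul_eq_mul_div, le_div_iff₀ hα]; linarith
    nlinarith [le_abs_self h, abs_nonneg h]
  calc ‖v‖ = √(‖v‖ ^ 2) := (Real.sqrt_sq (norm_nonneg v)).symm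
    _ ≤ √(2 * ((∑ j, m j) / α + |h|) * ‖x‖ ^ (-α)) := Real.sqrt_le_sqrt hsq
    _ = _ := by
        rw [Real.sqrt_mul' _ (Real.rpow_nonneg (norm_nonneg x) _), Real.sqrt_eq_rpow,
          Real.sqrt_eq_rpow, ← Real.rpow_mul (norm_nonneg x)]
        ring_nf

lemma eventually_norm_le_norm_sub (hc : Function.Injective c) (hj₀ : c j₀ = 0) :
    ∀ᶠ x in 𝓝 (0 : E), ∀ j, ‖x‖ ≤ ‖x - c j‖ := by
  refine eventually_all.2 fun j => ?_
  by_cases hj : j = j₀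
  · simp [hj, hj₀]
  have hcj : 0 < ‖c j‖ := norm_pos_iff.2 (hj₀ ▸ hc.ne hj)
  have hnorm : Tendsto (fun x : E => ‖x‖) (𝓝 0) (𝓝 0) := by
    simpa using (continuous_norm (E := E)).tendsto 0
  have hsub : Tendsto (fun x : E => ‖x - c j‖) (𝓝 0) (𝓝 ‖c j‖) := by
    simpa using ((continuous_id.sub continuous_const).norm (E := E)).tendsto' 0 _ rfl
  exact (hnorm.eventually_lt hsub hcj).mono fun _ => le_of_lt

variable [InnerProductSpace ℝ E]

def centerForce (m : ι → ℝ) (c : ι → E) (α : ℝ) (x : E) : E :=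
  -∑ j, m j • ‖x - c j‖ ^ (-(α + 2)) • (x - c j)

-- `d²/dt² ‖y t‖ ^ 2` at a time where `y t = x`, `ẏ t = v` and `ÿ t = centerForce m c α x`.
def inertiaSecondDeriv (m : ι → ℝ) (c : ι → E) (α : ℝ) (x v : E) : ℝ :=
  2 * (⟪x, centerForce m c α x⟫ + ‖v‖ ^ 2)

lemma norm_centerForce_le (hm : ∀ j, 0 ≤ m j) (hα : -1 ≤ α) (hx : x ≠ 0)
    (hnear : ∀ j, ‖x‖ ≤ ‖x - c j‖) :
    ‖centerForce m c α x‖ ≤ (∑ j, m j) * ‖x‖ ^ (-(α + 1)) := by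
  have hx : 0 < ‖x‖ := norm_pos_iff.2 hx
  rw [centerForce, norm_neg, Finset.sum_mul]
  refine (norm_sum_le _ _).trans (Finset.sum_le_sum fun j _ => ?_)
  have hj : 0 < ‖x - c j‖ := hx.trans_le (hnear j)
  calc ‖m j • ‖x - c j‖ ^ (-(α + 2)) • (x - c j)‖ = m j * ‖x - c j‖ ^ (-(α + 1)) := by
        rw [norm_smul, norm_smul, Real.norm_of_nonneg (hm j),
          Real.norm_of_nonneg (Real.rpow_nonneg hj.le _), ← Real.rpow_add_one hj.ne']
        ring_nf
    _ ≤ m j * ‖x‖ ^ (-(α + 1)) :=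
        mul_le_mul_of_nonneg_left (Real.rpow_le_rpow_of_nonpos hx (hnear j) (by linarith))
          (hm j)

lemma tendsto_inner_centerForce_add (hc : Function.Injective c) (hj₀ : c j₀ = 0) :
    Tendsto (fun x => ⟪x, centerForce m c α x⟫ + m j₀ * ‖x‖ ^ (-α)) (𝓝[≠] 0) (𝓝 0) := by
  classical
  set g : ι → E → ℝ := fun j x => m j * ‖x - c j‖ ^ (-(α + 2)) * ⟪x, x - c j⟫
  have hsplit : ∀ x ≠ (0 : E),
      ⟪x, centerForce m c α x⟫ + m j₀ * ‖x‖ ^ (-α) = -∑ j ∈ Finset.univ.erase j₀, g j x := by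
    intro x hx
    have hx : 0 < ‖x‖ := norm_pos_iff.2 hx
    have hg₀ : g j₀ x = m j₀ * ‖x‖ ^ (-α) := by
      simp only [g, hj₀, sub_zero, real_inner_self_eq_norm_sq, mul_assoc]
      rw [← Real.rpow_natCast, ← Real.rpow_add hx]
      norm_num
    simp only [centerForce, inner_neg_right, inner_sum, real_inner_smul_right]
    rw [← Finset.add_sum_erase _ _ (Finset.mem_univ j₀), ← hg₀]
    simp only [g, mul_assoc]
    ring
  have hcont : ∀ j ∈ Finset.univ.erase j₀, Tendsto (g j) (𝓝 0) (𝓝 0) := by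
    intro j hj
    have hcj : c j ≠ 0 := hj₀ ▸ hc.ne (Finset.ne_of_mem_erase hj)
    have : ContinuousAt (g j) 0 := by
      refine (continuousAt_const.mul (ContinuousAt.rpow_const ?_ (Or.inl ?_))).mul ?_
      · fun_prop
      · simpa using hcj
      · fun_prop
    simpa [g] using this.tendsto
  have hsum := (tendsto_finsetSum _ hcont).neg.mono_left (nhdsWithin_le_nhds (s := {0}ᶜ))
  simp only [Finset.sum_const_zero, neg_zero] at hsum
  exact hsum.congr' (eventually_nhdsWithin_of_forall fun x hx => (hsplit x hx).symm)

lemma eventually_nhdsNE_zero_near_center (hc : Function.Injective c) (hj₀ : c j₀ = 0)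
    (hα : 0 < α) {d : ℝ} (hd : 0 < d) (B : ℝ) :
    ∀ᶠ x in 𝓝[≠] (0 : E), (∀ j, ‖x‖ ≤ ‖x - c j‖) ∧
      |⟪x, centerForce m c α x⟫ + m j₀ * ‖x‖ ^ (-α)| ≤ 1 ∧
      1 ≤ ‖x‖ ^ (-α) ∧ B ≤ d * ‖x‖ ^ (-α) := by
  have hX : Tendsto (fun x : E => ‖x‖ ^ (-α)) (𝓝[≠] 0) atTop :=
    (tendsto_rpow_neg_nhdsGT_zero (neg_lt_zero.2 hα)).comp tendsto_norm_nhdsNE_zero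
  refine ((eventually_norm_le_norm_sub hc hj₀).filter_mono nhdsWithin_le_nhds).and
    (((tendsto_inner_centerForce_add hc hj₀).abs.eventually (ge_mem_nhds ?_)).and
      ((hX.eventually_ge_atTop 1).and ((hX.const_mul_atTop hd).eventually_ge_atTop B)))
  simp

lemma two_sub_mul_centerPotential_le_inertiaSecondDeriv (hm : ∀ j, 0 ≤ m j) (hα : 0 < α)
    (hj₀ : c j₀ = 0) (hS : |⟪x, centerForce m c α x⟫ + m j₀ * ‖x‖ ^ (-α)| ≤ 1)
    (hv : ‖v‖ ^ 2 = 2 * (centerPotential m c α x + h)) :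
    2 * (2 - α) * centerPotential m c α x - 2 - 4 * |h| ≤ inertiaSecondDeriv m c α x v := by
  have hV := mul_rpow_neg_le_mul_centerPotential (x := x) hm hα hj₀
  rw [inertiaSecondDeriv, hv]
  linarith [abs_le.1 hS, neg_abs_le h]

lemma mul_rpow_neg_le_inertiaSecondDeriv (hm : ∀ j, 0 ≤ m j) (hα : 0 < α) (hα2 : α ≤ 2)
    (hj₀ : c j₀ = 0) (hS : |⟪x, centerForce m c α x⟫ + m j₀ * ‖x‖ ^ (-α)| ≤ 1)
    (hv : ‖v‖ ^ 2 = 2 * (centerPotential m c α x + h)) {d : ℝ} (hd : α * d ≤ m j₀ * (2 - α))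
    (hX : 2 + 4 * |h| ≤ d * ‖x‖ ^ (-α)) :
    d * ‖x‖ ^ (-α) ≤ inertiaSecondDeriv m c α x v := by
  have hV := mul_rpow_neg_le_mul_centerPotential (x := x) hm hα hj₀
  have h2dX : 2 * d * ‖x‖ ^ (-α) ≤ 2 * (2 - α) * centerPotential m c α x := by
    refine le_of_mul_le_mul_left ?_ hα
    calc α * (2 * d * ‖x‖ ^ (-α)) = 2 * (α * d) * ‖x‖ ^ (-α) := by ring
      _ ≤ 2 * (m j₀ * (2 - α)) * ‖x‖ ^ (-α) := by gcongr
      _ = 2 * (2 - α) * (m j₀ * ‖x‖ ^ (-α)) := by ring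
      _ ≤ 2 * (2 - α) * (α * centerPotential m c α x) := by gcongr
      _ = α * (2 * (2 - α) * centerPotential m c α x) := by ring
  linarith [two_sub_mul_centerPotential_le_inertiaSecondDeriv hm hα hj₀ hS hv]

lemma four_mul_norm_sq_le_div_mul_inertiaSecondDeriv_add (hm : ∀ j, 0 ≤ m j) (hα : 0 < α)
    (hα2 : α < 2) (hj₀ : c j₀ = 0) (hS : |⟪x, centerForce m c α x⟫ + m j₀ * ‖x‖ ^ (-α)| ≤ 1)
    (hv : ‖v‖ ^ 2 = 2 * (centerPotential m c α x + h)) :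
    4 * ‖v‖ ^ 2 ≤ 4 / (2 - α) * inertiaSecondDeriv m c α x v
      + (4 / (2 - α) * (2 + 4 * |h|) + 8 * |h|) := by
  have hcore := two_sub_mul_centerPotential_le_inertiaSecondDeriv hm hα hj₀ hS hv
  have h2α : 0 < 2 - α := by linarith
  have : 8 * centerPotential m c α x ≤
      4 / (2 - α) * (inertiaSecondDeriv m c α x v + (2 + 4 * |h|)) := by
    rw [div_mul_eq_mul_div, le_div_iff₀ h2α]; linarith
  rw [hv]
  linarith [le_abs_self h]

lemma abs_inner_add_three_mul_inner_centerForce_le (hm : ∀ j, 0 ≤ m j) (hα : 0 < α)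
    (hx : x ≠ 0) (hnear : ∀ j, ‖x‖ ≤ ‖x - c j‖) (hx1 : 1 ≤ ‖x‖ ^ (-α))
    (hv : ‖v‖ ^ 2 = 2 * (centerPotential m c α x + h)) {w : E}
    (hw : ‖w‖ ≤ (α + 3) * (∑ j, m j) * ‖x‖ ^ (-(α + 2)) * ‖v‖) {d : ℝ} (hd : 0 < d)
    (hI : d * ‖x‖ ^ (-α) ≤ inertiaSecondDeriv m c α x v) :
    |2 * (⟪x, w⟫ + 3 * ⟪v, centerForce m c α x⟫)| ≤
      2 * (α + 6) * (∑ j, m j) * √(2 * ((∑ j, m j) / α + |h|)) / d ^ (3 / 2 + 1 / α : ℝ) *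
        inertiaSecondDeriv m c α x v ^ (3 / 2 + 1 / α : ℝ) := by
  have hF := norm_centerForce_le (α := α) hm (by linarith) hx hnear
  have hvel := norm_le_sqrt_mul_rpow_neg hm hα hx hnear hx1 hv
  set M := ∑ j, m j
  set r := ‖x‖
  set p : ℝ := 3 / 2 + 1 / α
  have hr : 0 < r := norm_pos_iff.2 hx
  have hM : 0 ≤ M := Finset.sum_nonneg fun j _ => hm j
  have hpow : r ^ (-(α + 1)) * r ^ (-(α / 2)) = (r ^ (-α)) ^ p := by
    rw [← Real.rpow_add hr, ← Real.rpow_mul hr.le]; congr 1; simp only [p]; field_simp; ring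
  have hrw : r * r ^ (-(α + 2)) = r ^ (-(α + 1)) := by
    rw [← Real.rpow_one_add' hr.le (by linarith)]; ring_nf
  have hbound : |2 * (⟪x, w⟫ + 3 * ⟪v, centerForce m c α x⟫)| ≤
      2 * (α + 6) * M * r ^ (-(α + 1)) * ‖v‖ := by
    have hxw : |⟪x, w⟫| ≤ (α + 3) * M * r ^ (-(α + 1)) * ‖v‖ :=
      calc |⟪x, w⟫| ≤ r * ‖w‖ := abs_real_inner_le_norm x w
        _ ≤ r * ((α + 3) * M * r ^ (-(α + 2)) * ‖v‖) := by gcongr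
        _ = _ := by rw [← hrw]; ring
    have hvF : |⟪v, centerForce m c α x⟫| ≤ M * r ^ (-(α + 1)) * ‖v‖ :=
      calc _ ≤ ‖v‖ * ‖centerForce m c α x‖ := abs_real_inner_le_norm _ _
        _ ≤ ‖v‖ * (M * r ^ (-(α + 1))) := by gcongr
        _ = _ := by ring
    calc _ ≤ 2 * (|⟪x, w⟫| + 3 * |⟪v, centerForce m c α x⟫|) := by
          rw [abs_mul, abs_two]; gcongr
          exact (abs_add_le _ _).trans (by rw [abs_mul, abs_of_pos (by norm_num : (0 : ℝ) < 3)])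
      _ ≤ _ := by linarith
  calc _ ≤ 2 * (α + 6) * M * r ^ (-(α + 1)) * ‖v‖ := hbound
    _ ≤ 2 * (α + 6) * M * r ^ (-(α + 1)) * (√(2 * (M / α + |h|)) * r ^ (-(α / 2))) := by
        gcongr
    _ = 2 * (α + 6) * M * √(2 * (M / α + |h|)) / d ^ p * (d * r ^ (-α)) ^ p := by
        rw [Real.mul_rpow hd.le (Real.rpow_nonneg hr.le _), ← hpow]
        field_simp
    _ ≤ _ := by gcongr

lemma HasDerivAt.exists_rpow_norm_smul {u : ℝ → E} {u' : E} {t : ℝ} (hu : HasDerivAt u u' t)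
    (hu0 : u t ≠ 0) (r : ℝ) :
    ∃ w, HasDerivAt (fun s => ‖u s‖ ^ r • u s) w t ∧ ‖w‖ ≤ (|r| + 1) * ‖u t‖ ^ r * ‖u'‖ := by
  have hpos : 0 < ‖u t‖ := norm_pos_iff.2 hu0
  have hsq : ∀ s (q : ℝ), (‖u s‖ ^ 2) ^ q = ‖u s‖ ^ (2 * q) := fun s q => by
    rw [← Real.rpow_natCast, ← Real.rpow_mul (norm_nonneg _)]; norm_num
  have hderiv := (hu.norm_sq.rpow_const (p := r / 2) (Or.inl (by positivity))).smul hu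
  simp only [hsq, mul_div_cancel₀ r two_ne_zero] at hderiv
  refine ⟨_, hderiv, ?_⟩
  have hr2 : ‖u t‖ ^ (2 * (r / 2 - 1)) * ‖u t‖ * ‖u t‖ = ‖u t‖ ^ r := by
    rw [mul_assoc, ← sq, ← Real.rpow_natCast, ← Real.rpow_add hpos]; ring_nf
  have hinner : |⟪u t, u'⟫| ≤ ‖u t‖ * ‖u'‖ := abs_real_inner_le_norm _ _
  rw [add_comm]
  refine (norm_add_le _ _).trans ?_
  rw [norm_smul, norm_smul, Real.norm_eq_abs, Real.norm_eq_abs, abs_mul, abs_mul, abs_mul,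
    abs_of_pos (Real.rpow_pos_of_pos hpos r), abs_of_pos (Real.rpow_pos_of_pos hpos _), abs_div,
    abs_two]
  have hradial : |⟪u t, u'⟫| * ‖u t‖ ^ (2 * (r / 2 - 1)) * ‖u t‖ ≤ ‖u t‖ ^ r * ‖u'‖ :=
    calc _ ≤ ‖u t‖ * ‖u'‖ * ‖u t‖ ^ (2 * (r / 2 - 1)) * ‖u t‖ := by gcongr
      _ = ‖u t‖ ^ r * ‖u'‖ := by rw [← hr2]; ring
  calc _ = |r| * (|⟪u t, u'⟫| * ‖u t‖ ^ (2 * (r / 2 - 1)) * ‖u t‖) + ‖u t‖ ^ r * ‖u'‖ := by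
        ring
    _ ≤ |r| * (‖u t‖ ^ r * ‖u'‖) + ‖u t‖ ^ r * ‖u'‖ := by gcongr
    _ = _ := by ring

lemma hasDerivAt_deriv_norm_sq {y : ℝ → E} {U : Set ℝ} (hU : IsOpen U)
    (hy : ∀ s ∈ U, DifferentiableAt ℝ y s) {t : ℝ} (ht : t ∈ U)
    (hv : DifferentiableAt ℝ (deriv y) t) :
    HasDerivAt (deriv fun s => ‖y s‖ ^ 2)
      (2 * (⟪y t, deriv (deriv y) t⟫ + ‖deriv y t‖ ^ 2)) t := by
  have heq : deriv (fun s => ‖y s‖ ^ 2) =ᶠ[𝓝 t] fun s => 2 * ⟪y s, deriv y s⟫ :=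
    eventually_of_mem (hU.mem_nhds ht) fun s hs => (hy s hs).hasDerivAt.norm_sq.deriv
  refine ((((hy t ht).hasDerivAt.inner ℝ hv.hasDerivAt).const_mul 2).congr_of_eventuallyEq
    heq).congr_deriv ?_
  rw [real_inner_self_eq_norm_sq]

lemma hasDerivAt_deriv_deriv_norm_sq {y : ℝ → E} {U : Set ℝ} (hU : IsOpen U)
    (hy : ∀ s ∈ U, DifferentiableAt ℝ y s) (hv : ∀ s ∈ U, DifferentiableAt ℝ (deriv y) s)
    {t : ℝ} (ht : t ∈ U) {w : E} (ha : HasDerivAt (deriv (deriv y)) w t) :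
    HasDerivAt (deriv (deriv fun s => ‖y s‖ ^ 2))
      (2 * (⟪y t, w⟫ + 3 * ⟪deriv y t, deriv (deriv y) t⟫)) t := by
  have heq : deriv (deriv fun s => ‖y s‖ ^ 2) =ᶠ[𝓝 t]
      fun s => 2 * (⟪y s, deriv (deriv y) s⟫ + ‖deriv y s‖ ^ 2) :=
    eventually_of_mem (hU.mem_nhds ht) fun s hs =>
      (hasDerivAt_deriv_norm_sq hU hy hs (hv s hs)).deriv
  have hy' := (hy t ht).hasDerivAt
  have hv' := (hv t ht).hasDerivAt
  refine (((hy'.inner ℝ ha).add hv'.norm_sq).const_mul 2).congr_of_eventuallyEq heq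
    |>.congr_deriv ?_
  ring

lemma deriv_norm_sq_nonneg {y : ℝ → E} {U : Set ℝ} (hU : IsOpen U)
    (hy : ∀ s ∈ U, DifferentiableAt ℝ y s)
    (hv : ∀ s ∈ U, DifferentiableAt ℝ (deriv y) s) {t : ℝ} (ht : 0 < t) (htU : Ioc 0 t ⊆ U)
    (hcont : ContinuousOn y (Icc 0 t)) (hy0 : y 0 = 0)
    (hconv : ∀ s ∈ Ioo 0 t, 0 ≤ deriv (deriv fun s => ‖y s‖ ^ 2) s) :
    0 ≤ deriv (fun s => ‖y s‖ ^ 2) t := by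
  have hsub : Ioo 0 t ⊆ U := Ioo_subset_Ioc_self.trans htU
  have hconvex : ConvexOn ℝ (Icc 0 t) fun s => ‖y s‖ ^ 2 := by
    refine convexOn_of_deriv2_nonneg (convex_Icc 0 t) (hcont.norm.pow 2) ?_ ?_ ?_ <;>
      rw [interior_Icc]
    · exact fun s hs =>
        (hy s (hsub hs)).hasDerivAt.norm_sq.differentiableAt.differentiableWithinAt
    · exact fun s hs => (hasDerivAt_deriv_norm_sq hU hy (hsub hs)
        (hv s (hsub hs))).differentiableAt.differentiableWithinAt
    · simpa using hconv
  have hslope := hconvex.slope_le_deriv (left_mem_Icc.2 ht.le) (right_mem_Icc.2 ht.le) ht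
    (hy t (htU (right_mem_Ioc.2 ht))).hasDerivAt.norm_sq.differentiableAt
  rw [slope_def_field, hy0, norm_zero, zero_pow two_ne_zero, sub_zero, sub_zero] at hslope
  exact le_trans (div_nonneg (by positivity) ht.le) hslope

lemma HasDerivAt.exists_centerForce_comp {y : ℝ → E} {v : E} {t : ℝ} (hy : HasDerivAt y v t)
    (hm : ∀ j, 0 ≤ m j) (hα : -2 ≤ α) (hx : y t ≠ 0) (hnear : ∀ j, ‖y t‖ ≤ ‖y t - c j‖) :
    ∃ w, HasDerivAt (fun s => centerForce m c α (y s)) w t ∧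
      ‖w‖ ≤ (α + 3) * (∑ j, m j) * ‖y t‖ ^ (-(α + 2)) * ‖v‖ := by
  have hx : 0 < ‖y t‖ := norm_pos_iff.2 hx
  have hterm : ∀ j, ∃ w, HasDerivAt (fun s => ‖y s - c j‖ ^ (-(α + 2)) • (y s - c j)) w t ∧
      ‖w‖ ≤ (α + 3) * ‖y t‖ ^ (-(α + 2)) * ‖v‖ := by
    intro j
    have hj : y t - c j ≠ 0 := norm_pos_iff.1 (hx.trans_le (hnear j))
    obtain ⟨w, hw, hwle⟩ := (hy.sub_const (c j)).exists_rpow_norm_smul hj (-(α + 2))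
    refine ⟨w, hw, hwle.trans ?_⟩
    rw [abs_of_nonpos (by linarith), neg_neg, show α + 2 + 1 = α + 3 by ring]
    have hpow := Real.rpow_le_rpow_of_nonpos hx (hnear j) (by linarith : -(α + 2) ≤ 0)
    have h3 : 0 ≤ α + 3 := by linarith
    gcongr
  choose w hw hwle using hterm
  refine ⟨-∑ j, m j • w j, (HasDerivAt.fun_sum fun j _ => (hw j).const_smul (m j)).neg, ?_⟩
  rw [norm_neg, mul_assoc, mul_assoc, Finset.sum_mul, Finset.mul_sum]
  refine norm_sum_le_of_le _ fun j _ => ?_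
  rw [norm_smul, Real.norm_of_nonneg (hm j)]
  calc m j * ‖w j‖ ≤ m j * ((α + 3) * ‖y t‖ ^ (-(α + 2)) * ‖v‖) :=
        mul_le_mul_of_nonneg_left (hwle j) (hm j)
    _ = _ := by ring

structure IsCenterSolutionOn (m : ι → ℝ) (c : ι → E) (α h : ℝ) (y : ℝ → E) (U : Set ℝ) :
    Prop where
  ne_center : ∀ t ∈ U, ∀ j, y t ≠ c j
  differentiableAt : ∀ t ∈ U, DifferentiableAt ℝ y t
  differentiableAt_deriv : ∀ t ∈ U, DifferentiableAt ℝ (deriv y) t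
  deriv_deriv : ∀ t ∈ U, deriv (deriv y) t = centerForce m c α (y t)
  norm_deriv_sq : ∀ t ∈ U, ‖deriv y t‖ ^ 2 = 2 * (centerPotential m c α (y t) + h)

lemma IsCenterSolutionOn.inertia_estimates {y : ℝ → E} {U : Set ℝ}
    (hsol : IsCenterSolutionOn m c α h y U) (hU : IsOpen U) {t : ℝ} (ht : t ∈ U)
    (hm : ∀ j, 0 ≤ m j) (hα : 0 < α) (hα2 : α < 2) (hj₀ : c j₀ = 0) {d : ℝ} (hd0 : 0 < d)
    (hd : α * d ≤ m j₀ * (2 - α)) (hnear : ∀ j, ‖y t‖ ≤ ‖y t - c j‖)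
    (hS : |⟪y t, centerForce m c α (y t)⟫ + m j₀ * ‖y t‖ ^ (-α)| ≤ 1)
    (hx1 : 1 ≤ ‖y t‖ ^ (-α)) (hX : 2 + 4 * |h| ≤ d * ‖y t‖ ^ (-α)) :
    0 < deriv (deriv fun s => ‖y s‖ ^ 2) t ∧
    (deriv (fun s => ‖y s‖ ^ 2) t) ^ 2
      ≤ (4 / (2 - α)) * (‖y t‖ ^ 2) * deriv (deriv (fun s => ‖y s‖ ^ 2)) t
        + (4 / (2 - α) * (2 + 4 * |h|) + 8 * |h|) * ‖y t‖ ^ 2 ∧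
    d ≤ deriv (deriv (fun s => ‖y s‖ ^ 2)) t * ((‖y t‖ ^ 2) ^ (α / 2)) ∧
    DifferentiableAt ℝ (deriv (deriv (fun s => ‖y s‖ ^ 2))) t ∧
    |deriv (deriv (deriv (fun s => ‖y s‖ ^ 2))) t|
      ≤ 2 * (α + 6) * (∑ j, m j) * √(2 * ((∑ j, m j) / α + |h|)) / d ^ (3 / 2 + 1 / α : ℝ) *
        (deriv (deriv (fun s => ‖y s‖ ^ 2)) t) ^ ((3 : ℝ) / 2 + 1 / α) := by
  have hx : y t ≠ 0 := hj₀ ▸ hsol.ne_center t ht j₀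
  have hr : 0 < ‖y t‖ := norm_pos_iff.2 hx
  have hv := hsol.norm_deriv_sq t ht
  have hI1 : deriv (fun s => ‖y s‖ ^ 2) t = 2 * ⟪y t, deriv y t⟫ :=
    (hsol.differentiableAt t ht).hasDerivAt.norm_sq.deriv
  have hI2 :
      deriv (deriv fun s => ‖y s‖ ^ 2) t = inertiaSecondDeriv m c α (y t) (deriv y t) := by
    rw [(hasDerivAt_deriv_norm_sq hU hsol.differentiableAt ht
      (hsol.differentiableAt_deriv t ht)).deriv, hsol.deriv_deriv t ht, inertiaSecondDeriv]
  have hlow := mul_rpow_neg_le_inertiaSecondDeriv hm hα hα2.le hj₀ hS hv hd hX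
  obtain ⟨w, hw, hwle⟩ :=
    (hsol.differentiableAt t ht).hasDerivAt.exists_centerForce_comp (α := α) hm (by linarith)
      hx hnear
  have hI3 := hasDerivAt_deriv_deriv_norm_sq hU hsol.differentiableAt
    hsol.differentiableAt_deriv ht (hw.congr_of_eventuallyEq
      (eventually_of_mem (hU.mem_nhds ht) hsol.deriv_deriv))
  rw [hsol.deriv_deriv t ht] at hI3
  refine ⟨?_, ?_, ?_, hI3.differentiableAt, ?_⟩
  · rw [hI2]
    exact lt_of_lt_of_le (by positivity) hlow
  · have hcs : ⟪y t, deriv y t⟫ ^ 2 ≤ ‖y t‖ ^ 2 * ‖deriv y t‖ ^ 2 := by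
      rw [← mul_pow, ← sq_abs]
      exact pow_le_pow_left₀ (abs_nonneg _) (abs_real_inner_le_norm _ _) 2
    have h4 := four_mul_norm_sq_le_div_mul_inertiaSecondDeriv_add hm hα hα2 hj₀ hS hv
    rw [hI1, hI2]
    nlinarith [sq_nonneg ‖y t‖]
  · rw [hI2]
    calc d = d * ‖y t‖ ^ (-α) * ‖y t‖ ^ α := by
          rw [mul_assoc, ← Real.rpow_add hr]; simp
      _ ≤ _ := by
          rw [← Real.rpow_natCast, ← Real.rpow_mul hr.le]
          push_cast
          rw [mul_div_cancel₀ α two_ne_zero]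
          gcongr
  · rw [hI3.deriv, hI2]
    exact abs_inner_add_three_mul_inner_centerForce_le hm hα hx hnear hx1 hv hwle hd0 hlow

end Centers

lemma tendsto_nhdsGT_zero_nhdsNE {X : Type*} [TopologicalSpace X] {y : ℝ → X} {x₀ : X}
    {δ : ℝ} (hδ : 0 < δ) (hy : ContinuousOn y (Icc (-δ) δ)) (hy0 : y 0 = x₀)
    (hne : ∀ t ∈ Ioo 0 δ, y t ≠ x₀) : Tendsto y (𝓝[>] 0) (𝓝[≠] x₀) := by
  refine tendsto_nhdsWithin_iff.2 ⟨?_, ?_⟩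
  · have := (hy.continuousAt (Icc_mem_nhds (by linarith) hδ)).tendsto
    rw [hy0] at this
    exact this.mono_left nhdsWithin_le_nhds
  · filter_upwards [Ioo_mem_nhdsGT hδ] with t ht using hne t ht

lemma isCenterSolutionOn_Ioo {ι : Type*} [Fintype ι] {m : ι → ℝ} {c : ι → ℂ} {α h δ : ℝ}
    {y : ℝ → ℂ} (hy_ne : ∀ t ∈ Icc (-δ) δ, t ≠ 0 → ∀ j, y t ≠ c j)
    (hy_d1 : ∀ t ∈ Icc (-δ) δ, t ≠ 0 → DifferentiableAt ℝ y t)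
    (hy_d2 : ∀ t ∈ Icc (-δ) δ, t ≠ 0 → DifferentiableAt ℝ (deriv y) t)
    (hy_eq : ∀ t ∈ Icc (-δ) δ, t ≠ 0 →
      deriv (deriv y) t = -∑ j, (m j : ℂ) * (y t - c j) / ((‖y t - c j‖ ^ (α + 2) : ℝ) : ℂ))
    (hy_energy : ∀ t ∈ Icc (-δ) δ, t ≠ 0 →
      (1 / 2) * ‖deriv y t‖ ^ 2 - ∑ j, m j / (α * ‖y t - c j‖ ^ α) = h) :
    IsCenterSolutionOn m c α h y (Ioo 0 δ) := by
  have hmem : ∀ t ∈ Ioo 0 δ, t ∈ Icc (-δ) δ := fun t ht => ⟨by linarith [ht.1, ht.2], ht.2.le⟩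
  refine ⟨fun t ht => hy_ne t (hmem t ht) ht.1.ne', fun t ht => hy_d1 t (hmem t ht) ht.1.ne',
    fun t ht => hy_d2 t (hmem t ht) ht.1.ne', fun t ht => ?_, fun t ht => ?_⟩
  · rw [hy_eq t (hmem t ht) ht.1.ne', centerForce]
    congr 1
    refine Finset.sum_congr rfl fun j _ => ?_
    rw [Real.rpow_neg (norm_nonneg _), Complex.real_smul, Complex.real_smul]
    push_cast
    ring
  · have := hy_energy t (hmem t ht) ht.1.ne'
    rw [centerPotential]
    linarith

end

/-- differential inequalities for the moment of inertia I(t) = |y(t)|². -/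
theorem stmt_5
    (N : ℕ) (hN : 0 < N) (c : Fin N → ℂ) (m : Fin N → ℝ)
    (hc_inj : Function.Injective c) (hm : ∀ j, 0 < m j)
    (α : ℝ) (hα1 : 1 ≤ α) (hα2 : α < 2)
    (hc1 : c ⟨0, hN⟩ = 0)
    (δ : ℝ) (hδ : 0 < δ) (y : ℝ → ℂ)
    (hy_cont : ContinuousOn y (Set.Icc (-δ) δ))
    (hy0 : y 0 = 0)
    (hy_ne : ∀ t ∈ Set.Icc (-δ) δ, t ≠ 0 → ∀ j, y t ≠ c j)
    (hy_d1 : ∀ t ∈ Set.Icc (-δ) δ, t ≠ 0 → DifferentiableAt ℝ y t)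
    (hy_d2 : ∀ t ∈ Set.Icc (-δ) δ, t ≠ 0 → DifferentiableAt ℝ (deriv y) t)
    (hy_eq : ∀ t ∈ Set.Icc (-δ) δ, t ≠ 0 →
      deriv (deriv y) t = -∑ j, (m j : ℂ) * (y t - c j) / ((‖y t - c j‖ ^ (α + 2) : ℝ) : ℂ))
    (h : ℝ)
    (hy_energy : ∀ t ∈ Set.Icc (-δ) δ, t ≠ 0 →
      (1 / 2) * ‖deriv y t‖ ^ 2 - ∑ j, m j / (α * ‖y t - c j‖ ^ α) = h) :
    ∃ δ₀ : ℝ, 0 < δ₀ ∧ δ₀ ≤ δ ∧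
      ∃ c₀ : ℝ, 0 ≤ c₀ ∧ ∃ d : ℝ, 0 < d ∧ ∃ e : ℝ, 0 < e ∧
        ∀ t : ℝ, 0 < t → t ≤ δ₀ →
          0 ≤ deriv (fun s => ‖y s‖ ^ 2) t ∧
          (deriv (fun s => ‖y s‖ ^ 2) t) ^ 2
            ≤ (4 / (2 - α)) * (‖y t‖ ^ 2) * deriv (deriv (fun s => ‖y s‖ ^ 2)) t
              + c₀ * ‖y t‖ ^ 2 ∧
          d ≤ deriv (deriv (fun s => ‖y s‖ ^ 2)) t * ((‖y t‖ ^ 2) ^ (α / 2)) ∧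
          DifferentiableAt ℝ (deriv (deriv (fun s => ‖y s‖ ^ 2))) t ∧
          |deriv (deriv (deriv (fun s => ‖y s‖ ^ 2))) t|
            ≤ e * (deriv (deriv (fun s => ‖y s‖ ^ 2)) t) ^ ((3 : ℝ) / 2 + 1 / α) := by
  have hα : 0 < α := by linarith
  have hsol := isCenterSolutionOn_Ioo (h := h) hy_ne hy_d1 hy_d2 hy_eq hy_energy
  have hM : 0 < ∑ j, m j := Finset.sum_pos (fun j _ => hm j) ⟨⟨0, hN⟩, Finset.mem_univ _⟩
  set d := m ⟨0, hN⟩ * (2 - α) / α with hd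
  have hd0 : 0 < d := div_pos (mul_pos (hm _) (by linarith)) hα
  have hy_tendsto : Tendsto y (𝓝[>] 0) (𝓝[≠] 0) :=
    tendsto_nhdsGT_zero_nhdsNE hδ hy_cont hy0 fun t ht => hc1 ▸ hsol.ne_center t ht ⟨0, hN⟩
  obtain ⟨δ₀, hδ₀, hgood⟩ := (nhdsGT_basis_Ioc 0).eventually_iff.1 <|
    (hy_tendsto.eventually (eventually_nhdsNE_zero_near_center hc_inj hc1 hα hd0
      (2 + 4 * |h|))).and (Ioo_mem_nhdsGT hδ)
  have hest := fun t (ht : t ∈ Ioc 0 δ₀) =>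
    let ⟨⟨hnear, hS, hx1, hX⟩, htδ⟩ := hgood ht
    hsol.inertia_estimates isOpen_Ioo htδ (fun j => (hm j).le) hα hα2 hc1 hd0
      (by rw [hd, mul_div_cancel₀ _ hα.ne']) hnear hS hx1 hX
  refine ⟨δ₀, hδ₀, (hgood (right_mem_Ioc.2 hδ₀)).2.2.le,
    4 / (2 - α) * (2 + 4 * |h|) + 8 * |h|, by have := sub_pos.2 hα2; positivity, d, hd0,
    2 * (α + 6) * (∑ j, m j) * √(2 * ((∑ j, m j) / α + |h|)) / d ^ (3 / 2 + 1 / α : ℝ),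
    by positivity, fun t ht0 htδ₀ => ?_⟩
  obtain ⟨-, hii, hiii, hdiff, hiv⟩ := hest t ⟨ht0, htδ₀⟩
  refine ⟨deriv_norm_sq_nonneg isOpen_Ioo hsol.differentiableAt hsol.differentiableAt_deriv ht0
    (fun s hs => (hgood ⟨hs.1, hs.2.trans htδ₀⟩).2)
    (hy_cont.mono (Icc_subset_Icc (by linarith) (hgood ⟨ht0, htδ₀⟩).2.2.le)) hy0
    (fun s hs => (hest s ⟨hs.1, hs.2.le.trans htδ₀⟩).1.le), hii, hiii, hdiff, hiv⟩
end

section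
/- Asymptotic velocity direction at a collision: let y be an isolated collision solution at the origin, let θ₋, θ₊ ∈ ℝ be such that y(t)/|y(t)| → e^{iθ∓} as t → 0∓, and set μ = (α+2)·√(m₁/(2α)). Then lim_{t → 0⁺} ẏ(t)·|y(t)|^{α/2} = (2μ/(2+α))·e^{iθ₊} and lim_{t → 0⁻} ẏ(t)·|y(t)|^{α/2} = −(2μ/(2+α))·e^{iθ₋}. -/
/-!
Near the collision the other centers exert a bounded force `F` and contribute a bounded
potential, so `y` is a Kepler motion `ÿ = -m₀ y/‖y‖^(α+2) + F` whose Kepler energy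
`‖ẏ‖²/2 - m₀/(α‖y‖^α)` stays within a bounded distance of `h`. The energy alone gives
`‖y‖^α ‖ẏ‖² → 2m₀/α`, hence `‖y‖ ‖ẏ‖ → 0` because `α < 2`.

Write `conj y · ẏ = p + i L` (radial and angular momentum). By the Lagrange–Jacobi identity
`ṗ = ‖ẏ‖² - m₀/‖y‖^α + O(‖y‖)`, which is positive near the collision as `α < 2`; since `p → 0`,
`p ≥ 0` just after the collision, so `‖y‖` increases there. As `|L̇| ≤ K‖y‖`, this gives
`|L(t)| ≤ K ‖y(t)‖ t`. Rescaling by `‖y‖^(α/2-1)`, the complex number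
`W = (p + i L) ‖y‖^(α/2-1)` has `|W|² = ‖y‖^α ‖ẏ‖² → 2m₀/α`, `Im W → 0` and `Re W ≥ 0`, so
`W → √(2m₀/α) = 2μ/(2+α)`, and `ẏ ‖y‖^(α/2) = W · y/‖y‖`. The limit before the collision follows
by reversing time.
-/

open Filter Topology Set ComplexConjugate

theorem tendsto_norm_rpow_of_tendsto_zero {ι E : Type*} [SeminormedAddGroup E] {l : Filter ι}
    {y : ι → E} {p : ℝ} (hy : Tendsto y l (𝓝 0)) (hp : 0 < p) :
    Tendsto (fun t => ‖y t‖ ^ p) l (𝓝 0) := by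
  simpa [Real.zero_rpow hp.ne'] using hy.norm.rpow_const (Or.inr hp.le)

theorem HasDerivAt.complex_re {f : ℝ → ℂ} {f' : ℂ} {t : ℝ} (hf : HasDerivAt f f' t) :
    HasDerivAt (fun s => (f s).re) f'.re t :=
  Complex.reCLM.hasFDerivAt.comp_hasDerivAt t hf

theorem HasDerivAt.complex_im {f : ℝ → ℂ} {f' : ℂ} {t : ℝ} (hf : HasDerivAt f f' t) :
    HasDerivAt (fun s => (f s).im) f'.im t :=
  Complex.imCLM.hasFDerivAt.comp_hasDerivAt t hf

theorem monotoneOn_Ioo_of_hasDerivAt_nonneg {f f' : ℝ → ℝ} {a b : ℝ}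
    (hf : ∀ t ∈ Ioo a b, HasDerivAt f (f' t) t) (hf' : ∀ t ∈ Ioo a b, 0 ≤ f' t) :
    MonotoneOn f (Ioo a b) :=
  monotoneOn_of_hasDerivWithinAt_nonneg (convex_Ioo a b)
    (fun t ht => (hf t ht).continuousAt.continuousWithinAt)
    (fun t ht => (hf t (interior_subset ht)).hasDerivWithinAt)
    (fun t ht => hf' t (interior_subset ht))

theorem MonotoneOn.nonneg_of_tendsto_nhdsGT {f : ℝ → ℝ} {a b t : ℝ} (hf : MonotoneOn f (Ioo a b))
    (hlim : Tendsto f (𝓝[>] a) (𝓝 0)) (ht : t ∈ Ioo a b) : 0 ≤ f t := by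
  refine le_of_tendsto hlim ?_
  filter_upwards [Ioo_mem_nhdsGT ht.1] with s hs
  exact hf ⟨hs.1, hs.2.trans ht.2⟩ ht hs.2.le

theorem norm_le_mul_of_tendsto_nhdsGT_zero {E : Type*} [NormedAddCommGroup E] [NormedSpace ℝ E]
    {f f' : ℝ → E} {C t : ℝ} (ht : 0 < t) (hlim : Tendsto f (𝓝[>] 0) (𝓝 0))
    (hf : ∀ s ∈ Ioc 0 t, HasDerivAt f (f' s) s) (hC : ∀ s ∈ Ioc 0 t, ‖f' s‖ ≤ C) :
    ‖f t‖ ≤ C * t := by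
  have hseg : ∀ s ∈ Ioo 0 t, ‖f t - f s‖ ≤ C * (t - s) := fun s hs =>
    norm_image_sub_le_of_norm_deriv_le_segment'
      (fun r hr => (hf r ⟨hs.1.trans_le hr.1, hr.2⟩).hasDerivWithinAt)
      (fun r hr => hC r ⟨hs.1.trans_le hr.1, hr.2.le⟩) t ⟨hs.2.le, le_rfl⟩
  have hright : Tendsto (fun s => C * (t - s)) (𝓝[>] 0) (𝓝 (C * t)) := by
    simpa using
      ((tendsto_id.mono_left (nhdsWithin_le_nhds (a := (0 : ℝ)))).const_sub t).const_mul C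
  refine le_of_tendsto_of_tendsto (by simpa using (hlim.const_sub (f t)).norm) hright ?_
  filter_upwards [Ioo_mem_nhdsGT ht] with s hs using hseg s hs

theorem Complex.tendsto_sqrt_of_tendsto_normSq {ι : Type*} {l : Filter ι} {W : ι → ℂ} {a : ℝ}
    (hnormSq : Tendsto (fun x => normSq (W x)) l (𝓝 a))
    (him : Tendsto (fun x => (W x).im) l (𝓝 0)) (hre : ∀ᶠ x in l, 0 ≤ (W x).re) :
    Tendsto W l (𝓝 (√a : ℝ)) := by
  have hre_eq : (fun x => √(normSq (W x) - (W x).im ^ 2)) =ᶠ[l] fun x => (W x).re := by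
    filter_upwards [hre] with x hx
    rw [normSq_apply, show (W x).re * (W x).re + (W x).im * (W x).im - (W x).im ^ 2 = (W x).re ^ 2
      by ring, Real.sqrt_sq hx]
  have hre_lim : Tendsto (fun x => (W x).re) l (𝓝 √a) := by
    refine Tendsto.congr' hre_eq ?_
    simpa using (hnormSq.sub (him.pow 2)).sqrt
  have hlim := ((continuous_ofReal.tendsto _).comp hre_lim).add
    (((continuous_ofReal.tendsto _).comp him).mul_const I)
  simpa [Function.comp_def, re_add_im] using hlim

structure PerturbedKeplerAt (m₀ α h K : ℝ) (y v F : ℝ → ℂ) (t : ℝ) : Prop where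
  ne_zero : y t ≠ 0
  hasDerivAt_pos : HasDerivAt y (v t) t
  hasDerivAt_vel : HasDerivAt v (F t - m₀ * y t / ((‖y t‖ ^ (α + 2) : ℝ) : ℂ)) t
  norm_force_le : ‖F t‖ ≤ K
  abs_energy_sub_le : |1 / 2 * ‖v t‖ ^ 2 - m₀ / (α * ‖y t‖ ^ α) - h| ≤ K

namespace PerturbedKeplerAt

variable {m₀ α h K t : ℝ} {y v F : ℝ → ℂ}

theorem norm_pos (hP : PerturbedKeplerAt m₀ α h K y v F t) : 0 < ‖y t‖ :=
  norm_pos_iff.2 hP.ne_zero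

theorem hasDerivAt_conj_mul (hP : PerturbedKeplerAt m₀ α h K y v F t) :
    HasDerivAt (fun s => conj (y s) * v s)
      ((‖v t‖ ^ 2 - m₀ / ‖y t‖ ^ α : ℝ) + conj (y t) * F t) t := by
  refine (hP.hasDerivAt_pos.star.mul hP.hasDerivAt_vel).congr_deriv ?_
  have hpow : ‖y t‖ ^ (α + 2) = ‖y t‖ ^ α * ‖y t‖ ^ 2 := by
    exact_mod_cast Real.rpow_add_natCast hP.norm_pos.ne' α 2
  have hyα : ((‖y t‖ ^ α : ℝ) : ℂ) ≠ 0 := by exact_mod_cast (Real.rpow_pos_of_pos hP.norm_pos α).ne'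
  have hy : ((‖y t‖ : ℝ) : ℂ) ≠ 0 := by exact_mod_cast hP.norm_pos.ne'
  have hconj := Complex.conj_mul' (y t)
  simp only [Complex.star_def]
  rw [hpow, Complex.conj_mul']
  push_cast
  field_simp
  linear_combination -↑m₀ * hconj

theorem comp_neg (hP : PerturbedKeplerAt m₀ α h K y v F (-t)) :
    PerturbedKeplerAt m₀ α h K (fun s => y (-s)) (fun s => -v (-s)) (fun s => F (-s)) t where
  ne_zero := hP.ne_zero
  hasDerivAt_pos := by
    simpa [Function.comp_def] using hP.hasDerivAt_pos.scomp t (hasDerivAt_neg t)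
  hasDerivAt_vel := by
    simpa [Function.comp_def, Pi.neg_def] using (hP.hasDerivAt_vel.scomp t (hasDerivAt_neg t)).neg
  norm_force_le := hP.norm_force_le
  abs_energy_sub_le := by simpa using hP.abs_energy_sub_le

variable {l : Filter ℝ}

theorem tendsto_norm_rpow_mul_sq (hα : 0 < α) (hP : ∀ᶠ t in l, PerturbedKeplerAt m₀ α h K y v F t)
    (hy : Tendsto y l (𝓝 0)) :
    Tendsto (fun t => ‖y t‖ ^ α * ‖v t‖ ^ 2) l (𝓝 (2 * m₀ / α)) := by
  have hyα := tendsto_norm_rpow_of_tendsto_zero hy hα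
  set E := fun t => 1 / 2 * ‖v t‖ ^ 2 - m₀ / (α * ‖y t‖ ^ α) - h
  have hE : Tendsto (fun t => ‖y t‖ ^ α * E t) l (𝓝 0) :=
    hyα.zero_mul_isBoundedUnder_le
      (isBoundedUnder_of_eventually_le (hP.mono fun t ht => ht.abs_energy_sub_le))
  have hlim := ((hE.const_mul 2).add (hyα.const_mul (2 * h))).add_const (2 * m₀ / α)
  rw [mul_zero, mul_zero, add_zero, zero_add] at hlim
  refine hlim.congr' ?_
  filter_upwards [hP] with t ht
  have hyα_pos : 0 < ‖y t‖ ^ α := Real.rpow_pos_of_pos ht.norm_pos α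
  simp only [E]
  field_simp
  ring

theorem tendsto_conj_mul (hα : 0 < α) (hα2 : α < 2)
    (hP : ∀ᶠ t in l, PerturbedKeplerAt m₀ α h K y v F t) (hy : Tendsto y l (𝓝 0)) :
    Tendsto (fun t => conj (y t) * v t) l (𝓝 0) := by
  have hsq := ((tendsto_norm_rpow_of_tendsto_zero hy (sub_pos.2 hα2)).mul
    (tendsto_norm_rpow_mul_sq hα hP hy)).sqrt
  rw [zero_mul, Real.sqrt_zero] at hsq
  refine tendsto_zero_iff_norm_tendsto_zero.2 (hsq.congr' ?_)
  filter_upwards [hP] with t ht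
  rw [← mul_assoc, ← Real.rpow_add ht.norm_pos, sub_add_cancel, Real.rpow_two, ← mul_pow,
    Real.sqrt_sq (by positivity), norm_mul, Complex.norm_conj]

-- the real part of the derivative in `hasDerivAt_conj_mul`, i.e. `(d/dt)² ‖y‖²/2`
theorem eventually_radial_pos (hm₀ : 0 < m₀) (hα : 0 < α) (hα2 : α < 2)
    (hP : ∀ᶠ t in l, PerturbedKeplerAt m₀ α h K y v F t) (hy : Tendsto y l (𝓝 0)) :
    ∀ᶠ t in l, 0 < ‖v t‖ ^ 2 - m₀ / ‖y t‖ ^ α + (conj (y t) * F t).re := by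
  have hyα := tendsto_norm_rpow_of_tendsto_zero hy hα
  have hyF : Tendsto (fun t => conj (y t) * F t) l (𝓝 0) := by
    refine Tendsto.zero_mul_isBoundedUnder_le ?_
      (isBoundedUnder_of_eventually_le (hP.mono fun t ht => ht.norm_force_le))
    simpa [Function.comp_def] using (Complex.continuous_conj.tendsto 0).comp hy
  have hlim := ((tendsto_norm_rpow_mul_sq hα hP hy).sub_const m₀).add
    (hyα.mul ((Complex.continuous_re.tendsto 0).comp hyF))
  rw [Complex.zero_re, mul_zero, add_zero] at hlim
  have hpos : 0 < 2 * m₀ / α - m₀ := by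
    rw [sub_pos, lt_div_iff₀ hα]
    nlinarith
  filter_upwards [hP, hlim.eventually_const_lt hpos] with t ht hlt
  have hyα_pos : 0 < ‖y t‖ ^ α := Real.rpow_pos_of_pos ht.norm_pos α
  refine pos_of_mul_pos_right (a := ‖y t‖ ^ α) ?_ hyα_pos.le
  convert hlt using 1
  simp only [Function.comp_apply]
  field_simp

theorem eventually_re_nonneg_and_abs_im_le (hm₀ : 0 < m₀) (hα : 0 < α) (hα2 : α < 2)
    (hP : ∀ᶠ t in 𝓝[>] 0, PerturbedKeplerAt m₀ α h K y v F t) (hy : Tendsto y (𝓝[>] 0) (𝓝 0)) :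
    ∀ᶠ t in 𝓝[>] 0, 0 ≤ (conj (y t) * v t).re ∧ |(conj (y t) * v t).im| ≤ K * ‖y t‖ * t := by
  have hw := tendsto_conj_mul hα hα2 hP hy
  obtain ⟨ε, hε, hsub⟩ :=
    mem_nhdsGT_iff_exists_Ioo_subset.1 (hP.and (eventually_radial_pos hm₀ hα hα2 hP hy))
  have hderiv (t) (ht : t ∈ Ioo 0 ε) := (hsub ht).1.hasDerivAt_conj_mul
  have hre_mono : MonotoneOn (fun t => (conj (y t) * v t).re) (Ioo 0 ε) :=
    monotoneOn_Ioo_of_hasDerivAt_nonneg (fun t ht => (hderiv t ht).complex_re)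
      (fun t ht => by rw [Complex.add_re, Complex.ofReal_re]; exact (hsub ht).2.le)
  have hre (t) (ht : t ∈ Ioo 0 ε) : 0 ≤ (conj (y t) * v t).re :=
    hre_mono.nonneg_of_tendsto_nhdsGT
      (by simpa only [Function.comp_def, Complex.zero_re] using
        (Complex.continuous_re.tendsto 0).comp hw) ht
  have hnorm_mono : MonotoneOn (fun t => ‖y t‖) (Ioo 0 ε) := by
    have hsq : MonotoneOn (fun t => ‖y t‖ ^ 2) (Ioo 0 ε) :=
      monotoneOn_Ioo_of_hasDerivAt_nonneg (fun t ht => (hsub ht).1.hasDerivAt_pos.norm_sq)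
        (fun t ht => by rw [Complex.inner, mul_comm (v t)]; exact mul_nonneg zero_le_two (hre t ht))
    exact fun s hs t ht hst =>
      (pow_le_pow_iff_left₀ (norm_nonneg _) (norm_nonneg _) two_ne_zero).1 (hsq hs ht hst)
  have him (t) (ht : t ∈ Ioo 0 ε) : |(conj (y t) * v t).im| ≤ K * ‖y t‖ * t := by
    have hIoc : ∀ s ∈ Ioc 0 t, s ∈ Ioo 0 ε := fun s hs => ⟨hs.1, hs.2.trans_lt ht.2⟩
    have hbound := norm_le_mul_of_tendsto_nhdsGT_zero ht.1
      (by simpa only [Function.comp_def, Complex.zero_im] using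
        (Complex.continuous_im.tendsto 0).comp hw)
      (fun s hs => (hderiv s (hIoc s hs)).complex_im) (C := ‖y t‖ * K) fun s hs => by
        calc ‖(((‖v s‖ ^ 2 - m₀ / ‖y s‖ ^ α : ℝ) : ℂ) + conj (y s) * F s).im‖
            ≤ ‖conj (y s) * F s‖ := by
              rw [Complex.add_im, Complex.ofReal_im, zero_add, Real.norm_eq_abs]
              exact Complex.abs_im_le_norm _
          _ = ‖y s‖ * ‖F s‖ := by rw [norm_mul, Complex.norm_conj]
          _ ≤ ‖y t‖ * K := mul_le_mul (hnorm_mono (hIoc s hs) ht hs.2)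
            (hsub (hIoc s hs)).1.norm_force_le (norm_nonneg _) (norm_nonneg _)
    simpa [mul_comm K] using hbound
  filter_upwards [Ioo_mem_nhdsGT hε] with t ht using ⟨hre t ht, him t ht⟩

theorem tendsto_mul_rpow_nhdsGT (hm₀ : 0 < m₀) (hα : 0 < α) (hα2 : α < 2)
    (hP : ∀ᶠ t in 𝓝[>] 0, PerturbedKeplerAt m₀ α h K y v F t) (hy : Tendsto y (𝓝[>] 0) (𝓝 0))
    {u : ℂ} (hu : Tendsto (fun t => y t / ‖y t‖) (𝓝[>] 0) (𝓝 u)) :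
    Tendsto (fun t => v t * ((‖y t‖ ^ (α / 2) : ℝ) : ℂ)) (𝓝[>] 0)
      (𝓝 ((√(2 * m₀ / α) : ℝ) * u)) := by
  -- `v ‖y‖^(α/2) = W · y/‖y‖`
  set W : ℝ → ℂ := fun t => conj (y t) * v t * ((‖y t‖ ^ (α / 2) / ‖y t‖ : ℝ) : ℂ)
  have hreim := eventually_re_nonneg_and_abs_im_le hm₀ hα hα2 hP hy
  have hnormSq : Tendsto (fun t => Complex.normSq (W t)) (𝓝[>] 0) (𝓝 (2 * m₀ / α)) := by
    refine (tendsto_norm_rpow_mul_sq hα hP hy).congr' ?_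
    filter_upwards [hP] with t ht
    have hy_pos := ht.norm_pos
    have hrpow : (‖y t‖ ^ (α / 2)) ^ 2 = ‖y t‖ ^ α := by
      rw [sq, ← Real.rpow_add hy_pos, add_halves]
    simp only [W, ← Complex.sq_norm, norm_mul, Complex.norm_conj, Complex.norm_real,
      Real.norm_eq_abs, abs_of_pos (div_pos (Real.rpow_pos_of_pos hy_pos _) hy_pos)]
    field_simp
    rw [hrpow, mul_comm]
  have him : Tendsto (fun t => (W t).im) (𝓝[>] 0) (𝓝 0) := by
    have hbound : Tendsto (fun t => K * t * ‖y t‖ ^ (α / 2)) (𝓝[>] 0) (𝓝 0) := by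
      simpa using ((tendsto_id.mono_left nhdsWithin_le_nhds).const_mul K).mul
        (tendsto_norm_rpow_of_tendsto_zero hy (half_pos hα))
    refine squeeze_zero_norm' ?_ hbound
    filter_upwards [hP, hreim] with t ht hle
    have hy_pos := ht.norm_pos
    simp only [W, Complex.im_mul_ofReal, norm_mul, Real.norm_eq_abs,
      abs_of_pos (div_pos (Real.rpow_pos_of_pos hy_pos _) hy_pos)]
    calc |(conj (y t) * v t).im| * (‖y t‖ ^ (α / 2) / ‖y t‖)
        ≤ K * ‖y t‖ * t * (‖y t‖ ^ (α / 2) / ‖y t‖) := by gcongr; exact hle.2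
      _ = K * t * ‖y t‖ ^ (α / 2) := by field_simp
  have hre : ∀ᶠ t in 𝓝[>] 0, 0 ≤ (W t).re := by
    filter_upwards [hreim] with t ht
    simp only [W, Complex.re_mul_ofReal]
    exact mul_nonneg ht.1 (by positivity)
  refine ((Complex.tendsto_sqrt_of_tendsto_normSq hnormSq him hre).mul hu).congr' ?_
  filter_upwards [hP] with t ht
  have hy : ((‖y t‖ : ℝ) : ℂ) ≠ 0 := by exact_mod_cast ht.norm_pos.ne'
  have hconj := Complex.conj_mul' (y t)
  simp only [W]
  push_cast
  field_simp
  linear_combination (v t * ((‖y t‖ ^ (α / 2) : ℝ) : ℂ)) * hconj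

theorem tendsto_mul_rpow_nhdsLT (hm₀ : 0 < m₀) (hα : 0 < α) (hα2 : α < 2)
    (hP : ∀ᶠ t in 𝓝[<] 0, PerturbedKeplerAt m₀ α h K y v F t) (hy : Tendsto y (𝓝[<] 0) (𝓝 0))
    {u : ℂ} (hu : Tendsto (fun t => y t / ‖y t‖) (𝓝[<] 0) (𝓝 u)) :
    Tendsto (fun t => v t * ((‖y t‖ ^ (α / 2) : ℝ) : ℂ)) (𝓝[<] 0)
      (𝓝 (-((√(2 * m₀ / α) : ℝ) * u))) := by
  have hneg : Tendsto Neg.neg (𝓝[>] (0 : ℝ)) (𝓝[<] 0) := by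
    simpa using tendsto_neg_nhdsGT (a := (0 : ℝ))
  have hreversed := tendsto_mul_rpow_nhdsGT hm₀ hα hα2
    ((hneg.eventually hP).mono fun t ht => ht.comp_neg) (hy.comp hneg) (hu.comp hneg)
  have hback : Tendsto Neg.neg (𝓝[<] (0 : ℝ)) (𝓝[>] 0) := by
    simpa using tendsto_neg_nhdsLT (a := (0 : ℝ))
  simpa [Function.comp_def] using (hreversed.comp hback).neg

end PerturbedKeplerAt

section NCenter

variable {ι : Type*} (s : Finset ι) (c : ι → ℂ) (m : ι → ℝ) (α : ℝ)

noncomputable def nCenterAccel (x : ℂ) : ℂ :=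
  -∑ j ∈ s, (m j : ℂ) * (x - c j) / ((‖x - c j‖ ^ (α + 2) : ℝ) : ℂ)

noncomputable def nCenterPotential (x : ℂ) : ℝ :=
  ∑ j ∈ s, m j / (α * ‖x - c j‖ ^ α)

variable {s c m α}

theorem continuousAt_nCenterAccel {x : ℂ} (hx : ∀ j ∈ s, x ≠ c j) :
    ContinuousAt (nCenterAccel s c m α) x := by
  refine (tendsto_finsetSum s fun j hj => ?_).neg
  have hpos : 0 < ‖x - c j‖ := norm_pos_iff.2 (sub_ne_zero.2 (hx j hj))
  have hdist : ContinuousAt (fun z : ℂ => ‖z - c j‖) x := by fun_prop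
  exact (continuousAt_const.mul (continuousAt_id.sub continuousAt_const)).div
    (Complex.continuous_ofReal.continuousAt.comp (hdist.rpow_const (Or.inl hpos.ne')))
    (by exact_mod_cast (Real.rpow_pos_of_pos hpos _).ne')

theorem continuousAt_nCenterPotential {x : ℂ} (hx : ∀ j ∈ s, x ≠ c j) :
    ContinuousAt (nCenterPotential s c m α) x := by
  rcases eq_or_ne α 0 with rfl | hα
  · have hzero : nCenterPotential s c m 0 = fun _ => 0 := by
      ext z
      simp [nCenterPotential]
    rw [hzero]
    exact continuousAt_const
  refine tendsto_finsetSum s fun j hj => ?_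
  have hpos : 0 < ‖x - c j‖ := norm_pos_iff.2 (sub_ne_zero.2 (hx j hj))
  have hdist : ContinuousAt (fun z : ℂ => ‖z - c j‖) x := by fun_prop
  exact continuousAt_const.div (continuousAt_const.mul (hdist.rpow_const (Or.inl hpos.ne')))
    (mul_ne_zero hα (Real.rpow_pos_of_pos hpos _).ne')

theorem exists_eventually_nCenterAccel_nCenterPotential_le {β : Type*} {l : Filter β}
    {y : β → ℂ} {x : ℂ}
    (hx : ∀ j ∈ s, x ≠ c j) (hy : Tendsto y l (𝓝 x)) :
    ∃ K, ∀ᶠ t in l, ‖nCenterAccel s c m α (y t)‖ ≤ K ∧ |nCenterPotential s c m α (y t)| ≤ K := by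
  refine ⟨‖nCenterAccel s c m α x‖ + |nCenterPotential s c m α x| + 1, ?_⟩
  have hA := ((continuousAt_nCenterAccel (m := m) (α := α) hx).tendsto.comp hy).norm
  have hU := ((continuousAt_nCenterPotential (m := m) (α := α) hx).tendsto.comp hy).norm
  filter_upwards [hA.eventually_le_const (lt_add_one _), hU.eventually_le_const (lt_add_one _)]
    with t hAt hUt
  simp only [Function.comp_apply, Real.norm_eq_abs] at hAt hUt
  constructor <;>
    linarith [norm_nonneg (nCenterAccel s c m α x), abs_nonneg (nCenterPotential s c m α x)]

theorem perturbedKeplerAt_of_nCenter [Fintype ι] [DecidableEq ι] {h K t : ℝ} {y : ℝ → ℂ}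
    {i₀ : ι} (hc₀ : c i₀ = 0) (hy : y t ≠ 0) (hd1 : DifferentiableAt ℝ y t)
    (hd2 : DifferentiableAt ℝ (deriv y) t)
    (heq : deriv (deriv y) t = nCenterAccel Finset.univ c m α (y t))
    (henergy : 1 / 2 * ‖deriv y t‖ ^ 2 - nCenterPotential Finset.univ c m α (y t) = h)
    (hF : ‖nCenterAccel (Finset.univ.erase i₀) c m α (y t)‖ ≤ K)
    (hU : |nCenterPotential (Finset.univ.erase i₀) c m α (y t)| ≤ K) :
    PerturbedKeplerAt (m i₀) α h K y (deriv y)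
      (fun s => nCenterAccel (Finset.univ.erase i₀) c m α (y s)) t where
  ne_zero := hy
  hasDerivAt_pos := hd1.hasDerivAt
  hasDerivAt_vel := by
    refine hd2.hasDerivAt.congr_deriv ?_
    rw [heq, nCenterAccel, nCenterAccel, ← Finset.add_sum_erase _ _ (Finset.mem_univ i₀), hc₀,
      sub_zero]
    ring
  norm_force_le := hF
  abs_energy_sub_le := by
    rw [nCenterPotential, ← Finset.add_sum_erase _ _ (Finset.mem_univ i₀), hc₀, sub_zero]
      at henergy
    rw [← henergy]
    convert hU using 2
    rw [nCenterPotential]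
    ring

end NCenter

/-- asymptotic velocity direction at a collision. -/
theorem stmt_8
    (N : ℕ) (hN : 0 < N) (c : Fin N → ℂ) (m : Fin N → ℝ)
    (hc_inj : Function.Injective c) (hm : ∀ j, 0 < m j)
    (α : ℝ) (hα1 : 1 ≤ α) (hα2 : α < 2)
    (hc1 : c ⟨0, hN⟩ = 0)
    (δ : ℝ) (hδ : 0 < δ) (y : ℝ → ℂ)
    (hy_cont : ContinuousOn y (Set.Icc (-δ) δ))
    (hy0 : y 0 = 0)
    (hy_ne : ∀ t ∈ Set.Icc (-δ) δ, t ≠ 0 → ∀ j, y t ≠ c j)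
    (hy_d1 : ∀ t ∈ Set.Icc (-δ) δ, t ≠ 0 → DifferentiableAt ℝ y t)
    (hy_d2 : ∀ t ∈ Set.Icc (-δ) δ, t ≠ 0 → DifferentiableAt ℝ (deriv y) t)
    (hy_eq : ∀ t ∈ Set.Icc (-δ) δ, t ≠ 0 →
      deriv (deriv y) t = -∑ j, (m j : ℂ) * (y t - c j) / ((‖y t - c j‖ ^ (α + 2) : ℝ) : ℂ))
    (h : ℝ)
    (hy_energy : ∀ t ∈ Set.Icc (-δ) δ, t ≠ 0 →
      (1 / 2) * ‖deriv y t‖ ^ 2 - ∑ j, m j / (α * ‖y t - c j‖ ^ α) = h)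
    (θm θp : ℝ)
    (hθm : Filter.Tendsto (fun t : ℝ => y t / ((‖y t‖ : ℝ) : ℂ)) (𝓝[<] (0 : ℝ))
      (𝓝 (Complex.exp ((θm : ℂ) * Complex.I))))
    (hθp : Filter.Tendsto (fun t : ℝ => y t / ((‖y t‖ : ℝ) : ℂ)) (𝓝[>] (0 : ℝ))
      (𝓝 (Complex.exp ((θp : ℂ) * Complex.I))))
    (μ : ℝ) (hμ : μ = (α + 2) * Real.sqrt (m ⟨0, hN⟩ / (2 * α))) :
    Filter.Tendsto (fun t : ℝ => deriv y t * ((‖y t‖ ^ (α / 2) : ℝ) : ℂ)) (𝓝[>] (0 : ℝ))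
      (𝓝 (((2 * μ / (2 + α) : ℝ) : ℂ) * Complex.exp ((θp : ℂ) * Complex.I))) ∧
    Filter.Tendsto (fun t : ℝ => deriv y t * ((‖y t‖ ^ (α / 2) : ℝ) : ℂ)) (𝓝[<] (0 : ℝ))
      (𝓝 (-(((2 * μ / (2 + α) : ℝ) : ℂ) * Complex.exp ((θm : ℂ) * Complex.I)))) := by
  set i₀ : Fin N := ⟨0, hN⟩
  have hα : 0 < α := by linarith
  have hIcc : Icc (-δ) δ ∈ 𝓝 (0 : ℝ) := Icc_mem_nhds (neg_neg_of_pos hδ) hδ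
  have hy_lim : Tendsto y (𝓝[≠] 0) (𝓝 0) :=
    hy0 ▸ (hy_cont.continuousAt hIcc).tendsto.mono_left nhdsWithin_le_nhds
  have hc_ne : ∀ j ∈ Finset.univ.erase i₀, (0 : ℂ) ≠ c j := fun j hj =>
    hc1 ▸ hc_inj.ne (Finset.ne_of_mem_erase hj).symm
  obtain ⟨K, hK⟩ :=
    exists_eventually_nCenterAccel_nCenterPotential_le (m := m) (α := α) hc_ne hy_lim
  have hP : ∀ᶠ t in 𝓝[≠] 0, PerturbedKeplerAt (m i₀) α h K y (deriv y)
      (fun s => nCenterAccel (Finset.univ.erase i₀) c m α (y s)) t := by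
    filter_upwards [mem_nhdsWithin_of_mem_nhds hIcc, self_mem_nhdsWithin, hK] with t ht ht0 hKt
    exact perturbedKeplerAt_of_nCenter hc1 (hc1 ▸ hy_ne t ht ht0 i₀) (hy_d1 t ht ht0)
      (hy_d2 t ht ht0) (hy_eq t ht ht0) (hy_energy t ht ht0) hKt.1 hKt.2
  have hconst : √(2 * m i₀ / α) = 2 * μ / (2 + α) := by
    rw [hμ, show 2 * m i₀ / α = 2 ^ 2 * (m i₀ / (2 * α)) by field_simp,
      Real.sqrt_mul (by positivity), Real.sqrt_sq zero_le_two]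
    field_simp
    ring
  rw [← hconst]
  exact ⟨PerturbedKeplerAt.tendsto_mul_rpow_nhdsGT (hm i₀) hα hα2
      (hP.filter_mono (nhdsGT_le_nhdsNE 0)) (hy_lim.mono_left (nhdsGT_le_nhdsNE 0)) hθp,
    PerturbedKeplerAt.tendsto_mul_rpow_nhdsLT (hm i₀) hα hα2
      (hP.filter_mono (nhdsLT_le_nhdsNE 0)) (hy_lim.mono_left (nhdsLT_le_nhdsNE 0)) hθm⟩
end

section
/- Angular variation of a zero-energy Kepler arc grazing a circle: let α ∈ [1,2), m₁ > 0, ω > 0, 0 < ρ < r*, and let x : [t₁, t₂] → ℂ \ {0} be a C² curve satisfying ω²·ẍ(t) = −m₁ x(t)/|x(t)|^{α+2} and the zero-energy identity ½|ẋ(t)|² = m₁/(ω² α |x(t)|^α) on [t₁, t₂], with |x(t₁)| = ρ, |x(t₂)| = r*, d/dt |x(t)| > 0 for t ∈ (t₁, t₂), and angular momentum Im(conj(x(t))·ẋ(t)) = √(2m₁/(ω²α))·ρ^{(2−α)/2}. Then for every continuous function θ : [t₁, t₂] → ℝ with x(t) = |x(t)|·e^{iθ(t)} one has θ(t₂) −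 θ(t₁) = (2/(2−α))·(π/2 − arcsin((ρ/r*)^{(2−α)/2})). -/
/-!
Write `r = |x|`, `p = (2 - α) / 2` and `k = √(2 m₁ / (ω² α))`, so that the angular momentum is
`L = k ρ^p`. Zero energy says `|ẋ|² r^α = k²`, hence `(r ṙ)² + L² = r² |ẋ|² = k² r^{2p}` and, since
`r` increases, `ṙ = k √(r^{2p} - ρ^{2p}) / r`. Along such a radial motion the function
`arccos ((ρ / r)^p) / p` has derivative `k ρ^p / r² = L / r²`, the angular velocity of `x`. So
`x / |x|` and `exp (i arccos ((ρ / r)^p) / p)` differ by a constant phase, and any continuous polar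
angle `θ` of `x` changes on `[t₁, t₂]` by `arccos ((ρ / r*)^p) / p - arccos 1 / p`.
-/

open Set Real ComplexConjugate
open scoped InnerProductSpace

theorem HasDerivAt.norm {F : Type*} [NormedAddCommGroup F] [InnerProductSpace ℝ F] {f : ℝ → F}
    {f' : F} {t : ℝ} (hf : HasDerivAt f f' t) (h0 : f t ≠ 0) :
    HasDerivAt (‖f ·‖) (⟪f t, f'⟫_ℝ / ‖f t‖) t := by
  have h := hf.norm_sq.sqrt (by positivity)
  simp only [Real.sqrt_sq (norm_nonneg _)] at h
  convert h using 1
  ring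

theorem eq_of_hasDerivAt_zero {E : Type*} [NormedAddCommGroup E] [NormedSpace ℝ E]
    [CompleteSpace E] {f : ℝ → E} {a b : ℝ} (hab : a ≤ b) (hf : ContinuousOn f (Icc a b))
    (hf' : ∀ t ∈ Ioo a b, HasDerivAt f 0 t) : f b = f a := by
  have h := intervalIntegral.integral_eq_sub_of_hasDerivAt_of_le hab hf hf' intervalIntegrable_const
  rwa [intervalIntegral.integral_zero, eq_comm, sub_eq_zero] at h

theorem IsPreconnected.sub_eq_sub_of_cexp_mul_I_eq {s : Set ℝ} (hs : IsPreconnected s)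
    {θ φ : ℝ → ℝ} (hθ : ContinuousOn θ s) (hφ : ContinuousOn φ s)
    (h : ∀ t ∈ s, Complex.exp (θ t * Complex.I) = Complex.exp (φ t * Complex.I))
    {a b : ℝ} (ha : a ∈ s) (hb : b ∈ s) : θ b - θ a = φ b - φ a := by
  have hmaps : MapsTo (fun t => θ t - φ t) s (AddSubgroup.zmultiples (2 * π)) := by
    intro t ht
    obtain ⟨n, hn⟩ := Complex.exp_eq_exp_iff_exists_int.1 (h t ht)
    have h0 : ((θ t - φ t - n * (2 * π) : ℝ) : ℂ) * Complex.I = 0 := by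
      push_cast
      linear_combination hn
    rw [mul_eq_zero, Complex.ofReal_eq_zero] at h0
    refine ⟨n, show n • (2 * π) = θ t - φ t from ?_⟩
    rw [zsmul_eq_mul]
    linarith [h0.resolve_right Complex.I_ne_zero]
  have := hs.constant_of_mapsTo (isDiscrete_iff_discreteTopology.2
    (inferInstanceAs (DiscreteTopology (AddSubgroup.zmultiples (2 * π))))) (hθ.sub hφ) hmaps hb ha
  simp only [Pi.sub_apply] at this
  linarith

theorem Complex.div_eq_re_conj_mul_add_im_conj_mul {z : ℂ} (hz : z ≠ 0) (v : ℂ) :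
    v / z = ((conj z * v).re / ‖z‖ ^ 2 : ℝ) + ((conj z * v).im / ‖z‖ ^ 2 : ℝ) * Complex.I := by
  have hn : ((‖z‖ ^ 2 : ℝ) : ℂ) = z * conj z := by
    rw [Complex.mul_conj, Complex.normSq_eq_norm_sq]
  calc v / z = conj z * v / ((‖z‖ ^ 2 : ℝ) : ℂ) := by
        rw [hn]; field_simp [hz, (map_ne_zero (starRingEnd ℂ)).2 hz]
    _ = _ := by
        conv_lhs => rw [← Complex.re_add_im (conj z * v)]
        push_cast; ring

theorem hasDerivAt_log_norm_add_mul_I {x : ℝ → ℂ} {φ : ℝ → ℝ} {v : ℂ} {t : ℝ}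
    (hx : HasDerivAt x v t) (hx0 : x t ≠ 0)
    (hφ : HasDerivAt φ ((conj (x t) * v).im / ‖x t‖ ^ 2) t) :
    HasDerivAt (fun s => (Real.log ‖x s‖ : ℂ) + φ s * Complex.I) (v / x t) t := by
  have hr := (hx.norm hx0).log (norm_ne_zero_iff.2 hx0)
  refine (hr.ofReal_comp.add (hφ.ofReal_comp.mul_const Complex.I)).congr_deriv ?_
  rw [Complex.div_eq_re_conj_mul_add_im_conj_mul hx0, Complex.inner, mul_comm v, div_div, ← sq]

theorem eq_norm_mul_cexp_of_hasDerivAt {x x' : ℝ → ℂ} {φ : ℝ → ℝ} {a b : ℝ}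
    (hx : ContinuousOn x (Icc a b)) (hx0 : ∀ t ∈ Icc a b, x t ≠ 0)
    (hφ : ContinuousOn φ (Icc a b)) (hx' : ∀ t ∈ Ioo a b, HasDerivAt x (x' t) t)
    (hφ' : ∀ t ∈ Ioo a b, HasDerivAt φ ((conj (x t) * x' t).im / ‖x t‖ ^ 2) t)
    (ha : x a = ‖x a‖ * Complex.exp (φ a * Complex.I)) :
    ∀ t ∈ Icc a b, x t = ‖x t‖ * Complex.exp (φ t * Complex.I) := by
  set ψ : ℝ → ℂ := fun s => (Real.log ‖x s‖ : ℂ) + φ s * Complex.I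
  have hψ_exp : ∀ t ∈ Icc a b, Complex.exp (ψ t) = ‖x t‖ * Complex.exp (φ t * Complex.I) := by
    intro t ht
    rw [Complex.exp_add, ← Complex.ofReal_exp, Real.exp_log (norm_pos_iff.2 (hx0 t ht))]
  intro t ht
  have haI : a ∈ Icc a b := ⟨le_rfl, ht.1.trans ht.2⟩
  have hconst : x t * Complex.exp (-ψ t) = x a * Complex.exp (-ψ a) := by
    refine eq_of_hasDerivAt_zero (f := fun s => x s * Complex.exp (-ψ s)) ht.1 ?_ ?_
    · have hψ : ContinuousOn ψ (Icc a b) :=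
        (Complex.continuous_ofReal.comp_continuousOn
          (hx.norm.log fun s hs => norm_ne_zero_iff.2 (hx0 s hs))).add
        ((Complex.continuous_ofReal.comp_continuousOn hφ).mul continuousOn_const)
      exact (hx.mul hψ.neg.cexp).mono (Icc_subset_Icc_right ht.2)
    · intro s hs
      have hs' : s ∈ Ioo a b := ⟨hs.1, hs.2.trans_le ht.2⟩
      have hxs := hx0 s (Ioo_subset_Icc_self hs')
      have hd : HasDerivAt (fun s => x s * Complex.exp (-ψ s))
          (x' s * Complex.exp (-ψ s) + x s * (Complex.exp (-ψ s) * -(x' s / x s))) s :=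
        (hx' s hs').mul (hasDerivAt_log_norm_add_mul_I (hx' s hs') hxs (hφ' s hs')).neg.cexp
      refine hd.congr_deriv ?_
      rw [mul_left_comm, mul_neg, mul_div_cancel₀ _ hxs]
      ring
  have ha' : x a * Complex.exp (-ψ a) = 1 := by
    rw [Complex.exp_neg, hψ_exp a haI, ← ha, mul_inv_cancel₀ (hx0 a haI)]
  rw [← hψ_exp t ht, ← mul_one (Complex.exp (ψ t)), ← ha', ← hconst, Complex.exp_neg]
  field_simp

theorem sub_eq_sub_of_hasDerivAt_angle {x x' : ℝ → ℂ} {θ φ : ℝ → ℝ} {a b : ℝ} (hab : a ≤ b)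
    (hx : ContinuousOn x (Icc a b)) (hx0 : ∀ t ∈ Icc a b, x t ≠ 0)
    (hx' : ∀ t ∈ Ioo a b, HasDerivAt x (x' t) t) (hθ : ContinuousOn θ (Icc a b))
    (hθx : ∀ t ∈ Icc a b, x t = ‖x t‖ * Complex.exp (θ t * Complex.I))
    (hφ : ContinuousOn φ (Icc a b))
    (hφ' : ∀ t ∈ Ioo a b, HasDerivAt φ ((conj (x t) * x' t).im / ‖x t‖ ^ 2) t) :
    θ b - θ a = φ b - φ a := by
  have ha : a ∈ Icc a b := left_mem_Icc.2 hab
  have hxφ := eq_norm_mul_cexp_of_hasDerivAt (φ := fun t => φ t + (θ a - φ a)) hx hx0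
    (hφ.add continuousOn_const) hx' (fun t ht => (hφ' t ht).add_const _)
    (by simpa using hθx a ha)
  have hr0 : ∀ t ∈ Icc a b, ((‖x t‖ : ℝ) : ℂ) ≠ 0 := fun t ht => by simpa using hx0 t ht
  have := isPreconnected_Icc.sub_eq_sub_of_cexp_mul_I_eq hθ (hφ.add continuousOn_const)
    (fun t ht => mul_left_cancel₀ (hr0 t ht) ((hθx t ht).symm.trans (hxφ t ht)))
    ha (right_mem_Icc.2 hab)
  simp only [Pi.add_apply] at this
  linarith

theorem HasDerivAt.arccos_const_div {R : ℝ → ℝ} {R' c t : ℝ} (hR : HasDerivAt R R' t)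
    (hc : 0 < c) (hcR : c < R t) :
    HasDerivAt (fun s => arccos (c / R s)) (c * R' / (R t * √(R t ^ 2 - c ^ 2))) t := by
  have hR0 : 0 < R t := hc.trans hcR
  have hu : c / R t < 1 := (div_lt_one hR0).2 hcR
  have hu0 : 0 < c / R t := div_pos hc hR0
  have h := (hasDerivAt_arccos (by linarith) hu.ne).comp t ((hasDerivAt_const t c).div hR hR0.ne')
  refine h.congr_deriv ?_
  have hS : 0 < √(R t ^ 2 - c ^ 2) := sqrt_pos.2 (by nlinarith)
  have hsqrt : √(1 - (c / R t) ^ 2) = √(R t ^ 2 - c ^ 2) / R t := by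
    rw [show 1 - (c / R t) ^ 2 = (R t ^ 2 - c ^ 2) / R t ^ 2 by field_simp,
      sqrt_div' _ (sq_nonneg _), sqrt_sq hR0.le]
  rw [hsqrt]
  field_simp
  ring

theorem hasDerivAt_arccos_rpow_div {r : ℝ → ℝ} {k ρ p t : ℝ} (hp : 0 < p) (hρ : 0 < ρ)
    (hρr : ρ < r t) (hr : HasDerivAt r (k * √((r t ^ p) ^ 2 - (ρ ^ p) ^ 2) / r t) t) :
    HasDerivAt (fun s => arccos (ρ ^ p / r s ^ p) / p) (k * ρ ^ p / r t ^ 2) t := by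
  have hr0 : 0 < r t := hρ.trans hρr
  have hρp : ρ ^ p < r t ^ p := rpow_lt_rpow hρ.le hρr hp
  have h := ((hr.rpow_const (p := p) (Or.inl hr0.ne')).arccos_const_div (rpow_pos_of_pos hρ p)
    hρp).div_const p
  refine h.congr_deriv ?_
  have hS : 0 < √((r t ^ p) ^ 2 - (ρ ^ p) ^ 2) := sqrt_pos.2 (by nlinarith [rpow_pos_of_pos hρ p])
  generalize √((r t ^ p) ^ 2 - (ρ ^ p) ^ 2) = S at hS ⊢
  have := rpow_pos_of_pos hr0 (p - 1)
  rw [show r t ^ p = r t ^ (p - 1) * r t by rw [← rpow_add_one hr0.ne', sub_add_cancel]]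
  field_simp

theorem re_conj_mul_eq_of_norm_sq {z v : ℂ} {k c α p : ℝ} (hz : z ≠ 0) (hk : 0 ≤ k)
    (hpα : 2 * p + α = 2) (hre : 0 ≤ (conj z * v).re) (him : (conj z * v).im = k * c)
    (hen : ‖v‖ ^ 2 * ‖z‖ ^ α = k ^ 2) :
    (conj z * v).re = k * √((‖z‖ ^ p) ^ 2 - c ^ 2) := by
  have hA : (conj z * v).re ^ 2 + (conj z * v).im ^ 2 = ‖z‖ ^ 2 * ‖v‖ ^ 2 := by
    rw [← mul_pow, ← Complex.norm_conj z, ← norm_mul, Complex.sq_norm, Complex.normSq_apply]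
    ring
  have hz2 : ‖z‖ ^ 2 = (‖z‖ ^ p) ^ 2 * ‖z‖ ^ α := by
    rw [← rpow_natCast, ← rpow_natCast (‖z‖ ^ p), ← rpow_mul (norm_nonneg z),
      ← rpow_add (norm_pos_iff.2 hz)]
    push_cast
    rw [mul_comm, hpα]
  rw [← sqrt_sq hre, ← sqrt_sq hk, ← sqrt_mul (sq_nonneg k)]
  congr 1
  linear_combination hA - ((conj z * v).im + k * c) * him + ‖v‖ ^ 2 * hz2 + (‖z‖ ^ p) ^ 2 * hen

theorem hasDerivAt_norm_of_energy {x : ℝ → ℂ} {v : ℂ} {t k c α p : ℝ} (hx : HasDerivAt x v t)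
    (hx0 : x t ≠ 0) (hk : 0 ≤ k) (hpα : 2 * p + α = 2) (hr' : 0 < deriv (‖x ·‖) t)
    (him : (conj (x t) * v).im = k * c) (hen : ‖v‖ ^ 2 * ‖x t‖ ^ α = k ^ 2) :
    HasDerivAt (‖x ·‖) (k * √((‖x t‖ ^ p) ^ 2 - c ^ 2) / ‖x t‖) t := by
  have hr : HasDerivAt (‖x ·‖) ((conj (x t) * v).re / ‖x t‖) t := by
    simpa only [Complex.inner, mul_comm] using hx.norm hx0
  have hre : 0 < (conj (x t) * v).re := by
    rwa [hr.deriv, div_pos_iff_of_pos_right (norm_pos_iff.2 hx0)] at hr'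
  rwa [← re_conj_mul_eq_of_norm_sq hx0 hk hpα hre.le him hen]

theorem stmt_11_general (α m₁ ω ρ rstar t₁ t₂ : ℝ)
    (hα1 : 1 ≤ α) (hα2 : α < 2) (hm : 0 < m₁)
    (hρ : 0 < ρ) (ht : t₁ < t₂)
    (x : ℝ → ℂ)
    (hx_ne : ∀ t ∈ Set.Icc t₁ t₂, x t ≠ 0)
    (hx_d1 : ∀ t ∈ Set.Icc t₁ t₂, DifferentiableAt ℝ x t)
    (hx_en : ∀ t ∈ Set.Icc t₁ t₂,
      (1 / 2) * ‖deriv x t‖ ^ 2 = m₁ / (ω ^ 2 * α * ‖x t‖ ^ α))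
    (hx_r1 : ‖x t₁‖ = ρ) (hx_r2 : ‖x t₂‖ = rstar)
    (hx_mono : ∀ t ∈ Set.Ioo t₁ t₂, 0 < deriv (fun s => ‖x s‖) t)
    (hx_am : ∀ t ∈ Set.Icc t₁ t₂,
      ((starRingEnd ℂ) (x t) * deriv x t).im
        = Real.sqrt (2 * m₁ / (ω ^ 2 * α)) * ρ ^ ((2 - α) / 2)) :
    ∀ θ : ℝ → ℝ, ContinuousOn θ (Set.Icc t₁ t₂) →
      (∀ t ∈ Set.Icc t₁ t₂, x t = ((‖x t‖ : ℝ) : ℂ) * Complex.exp ((θ t : ℂ) * Complex.I)) →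
      θ t₂ - θ t₁ = (2 / (2 - α)) * (Real.pi / 2 - Real.arcsin ((ρ / rstar) ^ ((2 - α) / 2))) := by
  intro θ hθ hθx
  set p := (2 - α) / 2 with hp_def
  set k := √(2 * m₁ / (ω ^ 2 * α))
  have hp : 0 < p := by linarith
  have hk2 : k ^ 2 = 2 * m₁ / (ω ^ 2 * α) := sq_sqrt (by positivity)
  have hIoo : Ioo t₁ t₂ ⊆ Icc t₁ t₂ := Ioo_subset_Icc_self
  have hx : ContinuousOn x (Icc t₁ t₂) := fun t ht => (hx_d1 t ht).continuousAt.continuousWithinAt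
  have hr0 : ∀ t ∈ Icc t₁ t₂, 0 < ‖x t‖ := fun t ht => norm_pos_iff.2 (hx_ne t ht)
  have hρ_lt : ∀ t ∈ Ioo t₁ t₂, ρ < ‖x t‖ := fun t hts => hx_r1 ▸
    strictMonoOn_of_deriv_pos (convex_Icc t₁ t₂) hx.norm (by rwa [interior_Icc])
      (left_mem_Icc.2 ht.le) (hIoo hts) hts.1
  have hen : ∀ t ∈ Icc t₁ t₂, ‖deriv x t‖ ^ 2 * ‖x t‖ ^ α = k ^ 2 := fun t ht => by
    rw [hk2, ← eq_div_iff (rpow_pos_of_pos (hr0 t ht) α).ne', div_div, mul_div_assoc]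
    linarith [hx_en t ht]
  have hφ : ContinuousOn (fun s => arccos (ρ ^ p / ‖x s‖ ^ p) / p) (Icc t₁ t₂) :=
    (continuous_arccos.comp_continuousOn (continuousOn_const.div
      (hx.norm.rpow_const fun _ _ => Or.inr hp.le)
      fun t ht => (rpow_pos_of_pos (hr0 t ht) p).ne')).div_const p
  have hφ' : ∀ t ∈ Ioo t₁ t₂, HasDerivAt (fun s => arccos (ρ ^ p / ‖x s‖ ^ p) / p)
      ((conj (x t) * deriv x t).im / ‖x t‖ ^ 2) t := fun t ht => by
    rw [hx_am t (hIoo ht)]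
    exact hasDerivAt_arccos_rpow_div hp hρ (hρ_lt t ht) (hasDerivAt_norm_of_energy
      (hx_d1 t (hIoo ht)).hasDerivAt (hx_ne t (hIoo ht)) (sqrt_nonneg _) (by ring) (hx_mono t ht)
      (hx_am t (hIoo ht)) (hen t (hIoo ht)))
  have hrstar : 0 < rstar := hx_r2 ▸ hr0 t₂ (right_mem_Icc.2 ht.le)
  rw [sub_eq_sub_of_hasDerivAt_angle ht.le hx hx_ne (fun t ht => (hx_d1 t (hIoo ht)).hasDerivAt)
    hθ hθx hφ hφ', show 2 / (2 - α) = 1 / p by rw [hp_def]; field_simp]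
  simp only [hx_r1, hx_r2, div_self (rpow_pos_of_pos hρ p).ne', arcsin_one,
    div_rpow hρ.le hrstar.le, arccos_eq_pi_div_two_sub_arcsin]
  ring

/-- angular variation of a zero-energy Kepler arc grazing a circle of radius ρ. -/
theorem stmt_11 (α m₁ ω ρ rstar t₁ t₂ : ℝ)
    (hα1 : 1 ≤ α) (hα2 : α < 2) (hm : 0 < m₁) (hω : 0 < ω)
    (hρ : 0 < ρ) (hρr : ρ < rstar) (ht : t₁ < t₂)
    (x : ℝ → ℂ)
    (hx_ne : ∀ t ∈ Set.Icc t₁ t₂, x t ≠ 0)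
    (hx_d1 : ∀ t ∈ Set.Icc t₁ t₂, DifferentiableAt ℝ x t)
    (hx_d2 : ∀ t ∈ Set.Icc t₁ t₂, DifferentiableAt ℝ (deriv x) t)
    (hx_c2 : ContinuousOn (deriv (deriv x)) (Set.Icc t₁ t₂))
    (hx_eq : ∀ t ∈ Set.Icc t₁ t₂,
      ((ω ^ 2 : ℝ) : ℂ) * deriv (deriv x) t = -(m₁ : ℂ) * x t / ((‖x t‖ ^ (α + 2) : ℝ) : ℂ))
    (hx_en : ∀ t ∈ Set.Icc t₁ t₂,
      (1 / 2) * ‖deriv x t‖ ^ 2 = m₁ / (ω ^ 2 * α * ‖x t‖ ^ α))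
    (hx_r1 : ‖x t₁‖ = ρ) (hx_r2 : ‖x t₂‖ = rstar)
    (hx_mono : ∀ t ∈ Set.Ioo t₁ t₂, 0 < deriv (fun s => ‖x s‖) t)
    (hx_am : ∀ t ∈ Set.Icc t₁ t₂,
      ((starRingEnd ℂ) (x t) * deriv x t).im
        = Real.sqrt (2 * m₁ / (ω ^ 2 * α)) * ρ ^ ((2 - α) / 2)) :
    ∀ θ : ℝ → ℝ, ContinuousOn θ (Set.Icc t₁ t₂) →
      (∀ t ∈ Set.Icc t₁ t₂, x t = ((‖x t‖ : ℝ) : ℂ) * Complex.exp ((θ t : ℂ) * Complex.I)) →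
      θ t₂ - θ t₁ = (2 / (2 - α)) * (Real.pi / 2 - Real.arcsin ((ρ / rstar) ^ ((2 - α) / 2))) :=
  stmt_11_general α m₁ ω ρ rstar t₁ t₂ hα1 hα2 hm hρ ht x hx_ne hx_d1 hx_en hx_r1 hx_r2 hx_mono
    hx_am
end
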